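/- arXiv:1101.3526 — 8 statements merged into one kernel-verified Lean document; each statement's English description precedes it below -/
import Mathlib

section
/- Let X be a compact metric space, T : X → X a minimal homeomorphism, ρ : X → ℝ continuous, and F : X × ℝ → X × ℝ the cylindrical cascade F(x,v) = (T(x), v + ρ(x)), with Birkhoff sums ρ_n : X → ℝ defined by F^n(x,v) = (T^n(x), v + ρ_n(x)) for all n ∈ ℤ (so ρ_n(x) = Σ_{j=0}^{n−1} ρ(T^j(x)) for n ≥ 0 and ρ_{−n}(x) = −ρ_n(T^{−n}(x))). Assume that for every x ∈ X the two-sided sequence (ρ_n(x))_{n∈ℤ} is unbounded from above and unbounded from below. Then every orbit of F is proper: for every x ∈ X, |ρ_n(x)| → ∞ as |n| → ∞. -/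
/-!
Suppose `|ρ_n(x)| < K` for infinitely many `n`, say `n → +∞` (the case `n → -∞` is the same
after reversing time). The sequence `a_n = ρ_n(x)` has increments bounded by `B = max |ρ|`, and
for every `D` it has a time `c` with `a_c ≤ a_{c+i} + 1` for all `|i| ≤ D`. If `a` is bounded
below on `ℕ`, such a `c` exists since otherwise, starting from a late time where `a < K`, one
could descend by more than `1` within `D` steps indefinitely. If not, a minimum of `a` on
`[0, t]`, for a time `t` with `a_t > -K` chosen after a very deep value, lies at distance more
than `D` from both ends. By the cocycle identity `ρ_i(T^c x) = a_{c+i} - a_c ≥ -1` for `|i| ≤ D`,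
so a cluster point `z` of the points `T^{c_D} x` has `ρ_n(z) ≥ -1` for all `n`, contradicting
unboundedness below at `z`.
-/

open Filter Topology Finset

structure IsIntBirkhoffSum {X G : Type*} [AddCommGroup G] (f : Equiv.Perm X) (ρ : X → G)
    (R : ℤ → X → G) : Prop where
  natCast (n : ℕ) (x : X) : R n x = ∑ j ∈ range n, ρ ((f ^ (j : ℤ)) x)
  neg_natCast (n : ℕ) (x : X) : R (-(n : ℤ)) x = -R n ((f ^ (-(n : ℤ))) x)

namespace IsIntBirkhoffSum

variable {X G : Type*} [AddCommGroup G] {f : Equiv.Perm X} {ρ : X → G} {R : ℤ → X → G}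

theorem natCast_add_one (hR : IsIntBirkhoffSum f ρ R) (m : ℕ) (x : X) :
    R (m + 1 : ℕ) x = ρ x + R m (f x) := by
  rw [hR.natCast, hR.natCast, sum_range_succ', add_comm]
  congr 1

theorem add_one (hR : IsIntBirkhoffSum f ρ R) (n : ℤ) (x : X) :
    R (n + 1) x = R n x + ρ ((f ^ n) x) := by
  cases n with
  | ofNat m =>
    simp only [Int.ofNat_eq_natCast, ← Nat.cast_succ, hR.natCast, sum_range_succ]
  | negSucc m =>
    have hsucc : f ((f ^ Int.negSucc m) x) = (f ^ (-(m : ℤ))) x := by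
      rw [← Equiv.Perm.mul_apply, ← zpow_one_add, Int.negSucc_eq]; congr 2; ring
    have hneg := hR.neg_natCast (m + 1) x
    rw [hR.natCast_add_one, Nat.cast_succ, ← Int.negSucc_eq, hsucc] at hneg
    rw [Int.negSucc_eq, show -((m : ℤ) + 1) + 1 = -m by ring, hR.neg_natCast, ← Int.negSucc_eq,
      hneg]
    abel

theorem add (hR : IsIntBirkhoffSum f ρ R) (m n : ℤ) (x : X) :
    R (m + n) x = R m x + R n ((f ^ m) x) := by
  have hzero (y : X) : R 0 y = 0 := by simpa using hR.natCast 0 y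
  have hcomp (k : ℤ) : (f ^ k) ((f ^ m) x) = (f ^ (m + k)) x := by
    rw [← Equiv.Perm.mul_apply, ← zpow_add, add_comm]
  induction n using Int.induction_on with
  | zero => simp [hzero]
  | succ k ih => rw [← add_assoc, hR.add_one, hR.add_one, ih, hcomp, add_assoc]
  | pred k ih =>
    have hstep := hR.add_one (m + (-k - 1)) x
    have hstep' := hR.add_one (-k - 1) ((f ^ m) x)
    rw [add_assoc, sub_add_cancel, ih] at hstep
    rw [sub_add_cancel, hcomp] at hstep'
    rw [eq_sub_of_add_eq hstep.symm, eq_sub_of_add_eq hstep'.symm]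
    abel

end IsIntBirkhoffSum

theorem Homeomorph.toEquiv_zpow {X : Type*} [TopologicalSpace X] (T : X ≃ₜ X) (n : ℤ) :
    T.toEquiv ^ n = (T ^ n).toEquiv :=
  (map_zpow (⟨⟨Homeomorph.toEquiv, rfl⟩, fun _ _ => rfl⟩ : (X ≃ₜ X) →* Equiv.Perm X) T n).symm

theorem IsIntBirkhoffSum.continuous {X G : Type*} [TopologicalSpace X] [AddCommGroup G]
    [TopologicalSpace G] [IsTopologicalAddGroup G] {T : X ≃ₜ X} {ρ : X → G} {R : ℤ → X → G}
    (hR : IsIntBirkhoffSum T.toEquiv ρ R) (hρ : Continuous ρ) (n : ℤ) : Continuous (R n) := by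
  have hnat (m : ℕ) : Continuous (R m) := by
    simp only [funext (hR.natCast m), Homeomorph.toEquiv_zpow, Homeomorph.coe_toEquiv]
    fun_prop
  obtain ⟨m, rfl | rfl⟩ := Int.eq_nat_or_neg n
  · exact hnat m
  · simp only [funext (hR.neg_natCast m), Homeomorph.toEquiv_zpow, Homeomorph.coe_toEquiv]
    fun_prop

theorem exists_forall_mem_of_eventually_mem {X ι κ : Type*} [TopologicalSpace X] [CompactSpace X]
    {l : Filter ι} [l.NeBot] (u : ι → X) {C : κ → Set X} (hC : ∀ k, IsClosed (C k))
    (hu : ∀ k, ∀ᶠ i in l, u i ∈ C k) : ∃ z, ∀ k, z ∈ C k := by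
  obtain ⟨z, -, hz⟩ := isCompact_univ.exists_mapClusterPt (f := l) (u := u) (by simp)
  exact ⟨z, fun k => (hC k).mem_of_mapClusterPt hz (hu k)⟩

section IntSequence

variable {a : ℤ → ℝ} {B K : ℝ}

theorem abs_sub_le_mul_of_abs_sub_succ_le (hstep : ∀ n, |a (n + 1) - a n| ≤ B) {p q : ℤ}
    (hpq : p ≤ q) : |a q - a p| ≤ (q - p) * B := by
  obtain ⟨k, rfl⟩ := Int.le.dest hpq
  have := dist_le_range_sum_of_dist_le (f := fun i : ℕ => a (p + i)) k (d := fun _ => B)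
    fun {i} _ => by simpa [Real.dist_eq, abs_sub_comm, add_assoc] using hstep (p + i)
  simpa [Real.dist_eq, abs_sub_comm] using this

theorem exists_descent {D : ℕ} (hdesc : ∀ c, ∃ i : ℤ, |i| ≤ D ∧ a (c + i) < a c - 1) (c : ℤ)
    (k : ℕ) : ∃ c', |c' - c| ≤ k * D ∧ a c' ≤ a c - k := by
  induction k with
  | zero => exact ⟨c, by simp, by simp⟩
  | succ k ih =>
    obtain ⟨c', hc'c, hac'⟩ := ih
    obtain ⟨i, hi, hai⟩ := hdesc c'
    refine ⟨c' + i, ?_, ?_⟩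
    · calc |c' + i - c| ≤ |c' - c| + |i| := by rw [add_sub_right_comm]; exact abs_add_le _ _
        _ ≤ (k + 1 : ℕ) * D := by push_cast; linarith
    · push_cast
      linarith

theorem exists_approx_local_min_of_bddBelow (hK : ∃ᶠ n in atTop, a n < K)
    (hbdd : BddBelow (a '' Set.Ici 0)) (D : ℕ) :
    ∃ c, ∀ i : ℤ, |i| ≤ D → a c - 1 ≤ a (c + i) := by
  by_contra! hdesc
  obtain ⟨L, hL⟩ := hbdd
  obtain ⟨c₀, hc₀, hac₀⟩ := frequently_atTop.mp hK (⌈K - L⌉₊ * D)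
  obtain ⟨c, hc, hac⟩ := exists_descent hdesc c₀ ⌈K - L⌉₊
  have hLc : L ≤ a c := hL ⟨c, Set.mem_Ici.mpr (by linarith [(abs_le.mp hc).1]), rfl⟩
  have hj : K - L ≤ ⌈K - L⌉₊ := Nat.le_ceil _
  linarith

theorem exists_local_min_of_not_bddBelow (hstep : ∀ n, |a (n + 1) - a n| ≤ B)
    (hK : ∃ᶠ n in atTop, K < a n) (hbdd : ¬ BddBelow (a '' Set.Ici 0)) (D : ℕ) :
    ∃ c, ∀ i : ℤ, |i| ≤ D → a c ≤ a (c + i) := by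
  have hB : 0 ≤ B := (abs_nonneg _).trans (hstep 0)
  have hlow : ∀ M, ∃ u, 0 ≤ u ∧ a u < M := by
    simpa [BddBelow, lowerBounds, Set.Nonempty] using hbdd
  obtain ⟨u, hu, hau⟩ := hlow (min (a 0) K - D * B)
  obtain ⟨t, hut, hat⟩ := frequently_atTop.mp hK u
  obtain ⟨c, hc, hmin⟩ := (Finset.Icc 0 t).exists_min_image a ⟨u, mem_Icc.mpr ⟨hu, hut⟩⟩
  rw [mem_Icc] at hc
  have hcu : a c ≤ a u := hmin u (mem_Icc.mpr ⟨hu, hut⟩)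
  have hleft : (D : ℤ) ≤ c := by
    by_contra! h
    have hdist := abs_sub_le_mul_of_abs_sub_succ_le hstep hc.1
    rw [Int.cast_zero, sub_zero] at hdist
    have hcD : (c : ℝ) * B ≤ D * B := mul_le_mul_of_nonneg_right (by exact_mod_cast h.le) hB
    linarith [neg_abs_le (a c - a 0), min_le_left (a 0) K]
  have hright : c + D ≤ t := by
    by_contra! h
    have hdist := abs_sub_le_mul_of_abs_sub_succ_le hstep hc.2
    have htc : ((t : ℝ) - c) * B ≤ D * B :=
      mul_le_mul_of_nonneg_right (by exact_mod_cast (by omega : t - c ≤ D)) hB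
    linarith [le_abs_self (a t - a c), min_le_right (a 0) K]
  exact ⟨c, fun i hi => hmin _ (mem_Icc.mpr (by constructor <;> linarith [abs_le.mp hi]))⟩

theorem exists_approx_local_min_of_frequently_atTop (hstep : ∀ n, |a (n + 1) - a n| ≤ B)
    (hK : ∃ᶠ n in atTop, |a n| < K) (D : ℕ) :
    ∃ c, ∀ i : ℤ, |i| ≤ D → a c - 1 ≤ a (c + i) := by
  by_cases hbdd : BddBelow (a '' Set.Ici 0)
  · exact exists_approx_local_min_of_bddBelow (hK.mono fun n hn => (le_abs_self _).trans_lt hn)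
      hbdd D
  · obtain ⟨c, hc⟩ := exists_local_min_of_not_bddBelow hstep
      (hK.mono fun n hn => neg_lt_of_abs_lt hn) hbdd D
    exact ⟨c, fun i hi => by linarith [hc i hi]⟩

theorem exists_approx_local_min (hstep : ∀ n, |a (n + 1) - a n| ≤ B)
    (hK : ∃ᶠ n in cofinite, |a n| < K) (D : ℕ) :
    ∃ c, ∀ i : ℤ, |i| ≤ D → a c - 1 ≤ a (c + i) := by
  rw [Int.cofinite_eq, frequently_sup] at hK
  rcases hK with hbot | htop
  · have hstep' (n : ℤ) : |a (-(n + 1)) - a (-n)| ≤ B := by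
      have := hstep (-(n + 1))
      rwa [show -(n + 1) + 1 = -n by ring, abs_sub_comm] at this
    have htop' : ∃ᶠ n in atTop, |a (-n)| < K :=
      tendsto_neg_atBot_atTop.frequently (by simpa using hbot)
    obtain ⟨c, hc⟩ := exists_approx_local_min_of_frequently_atTop (a := fun n => a (-n)) hstep'
      htop' D
    refine ⟨-c, fun i hi => ?_⟩
    have := hc (-i) (by rwa [abs_neg])
    rwa [neg_add, neg_neg] at this
  · exact exists_approx_local_min_of_frequently_atTop hstep htop D

end IntSequence

theorem cascade_all_orbits_proper_general
    {X : Type*} [MetricSpace X] [CompactSpace X]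
    (T : X ≃ₜ X)
    (ρ : X → ℝ) (hρ : Continuous ρ)
    (R : ℤ → X → ℝ)
    (hRpos : ∀ (n : ℕ) (x : X),
      R n x = ∑ j ∈ Finset.range n, ρ ((T.toEquiv ^ (j : ℤ)) x))
    (hRneg : ∀ (n : ℕ) (x : X),
      R (-(n : ℤ)) x = - R n ((T.toEquiv ^ (-(n : ℤ))) x))
    (hunbdd : ∀ x : X, ¬ BddAbove (Set.range fun n : ℤ => R n x) ∧
      ¬ BddBelow (Set.range fun n : ℤ => R n x)) :
    ∀ x : X, Filter.Tendsto (fun n : ℤ => |R n x|) Filter.cofinite Filter.atTop := by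
  intro x
  by_contra hproper
  simp only [tendsto_atTop, not_forall, not_eventually, not_le] at hproper
  obtain ⟨K, hK⟩ := hproper
  obtain ⟨B, hB⟩ := isCompact_univ.exists_bound_of_continuousOn hρ.continuousOn
  have hR : IsIntBirkhoffSum T.toEquiv ρ R := ⟨hRpos, hRneg⟩
  have hstep (n : ℤ) : |R (n + 1) x - R n x| ≤ B := by
    simpa [hR.add_one] using hB _ (Set.mem_univ _)
  choose c hc using exists_approx_local_min hstep hK
  obtain ⟨z, hz⟩ := exists_forall_mem_of_eventually_mem (l := atTop) (fun D => (T.toEquiv ^ c D) x)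
    (C := fun n => {y | -1 ≤ R n y})
    (fun n => isClosed_le continuous_const (hR.continuous hρ n))
    fun n => by
      filter_upwards [eventually_ge_atTop n.natAbs] with D hD
      have := hc D n (by rw [Int.abs_eq_natAbs]; exact_mod_cast hD)
      show -1 ≤ R n ((T.toEquiv ^ c D) x)
      linarith [hR.add (c D) n x]
  exact (hunbdd z).2 ⟨-1, by rintro _ ⟨n, rfl⟩; exact hz n⟩

/-- For a cylindrical cascade `F(x,v) = (T x, v + ρ x)` over a minimal homeomorphism of a
compact metric space, if every two-sided sequence of Birkhoff sums `(ρ_n(x))_{n ∈ ℤ}` is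
unbounded from above and from below, then every orbit is proper:
`|ρ_n(x)| → ∞` as `|n| → ∞`. -/
theorem cascade_all_orbits_proper
    {X : Type*} [MetricSpace X] [CompactSpace X]
    (T : X ≃ₜ X)
    (hT : ∀ x : X, Dense {y : X | ∃ n : ℤ, (T.toEquiv ^ n) x = y})
    (ρ : X → ℝ) (hρ : Continuous ρ)
    (R : ℤ → X → ℝ)
    (hRpos : ∀ (n : ℕ) (x : X),
      R n x = ∑ j ∈ Finset.range n, ρ ((T.toEquiv ^ (j : ℤ)) x))
    (hRneg : ∀ (n : ℕ) (x : X),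
      R (-(n : ℤ)) x = - R n ((T.toEquiv ^ (-(n : ℤ))) x))
    (hunbdd : ∀ x : X, ¬ BddAbove (Set.range fun n : ℤ => R n x) ∧
      ¬ BddBelow (Set.range fun n : ℤ => R n x)) :
    ∀ x : X, Filter.Tendsto (fun n : ℤ => |R n x|) Filter.cofinite Filter.atTop :=
  cascade_all_orbits_proper_general T ρ hρ R hRpos hRneg hunbdd
end

section
/- Let ℓ ≥ 2, let I : ℝ^ℓ → ℝ^ℓ be an affine Euclidean isometry, let U ⊂ ℝ^ℓ be an open bounded set, and set 𝒰 := U ∪ I(U). If 𝒦 is a B/P-M set for I∘I avoiding 𝒰, then K := 𝒦 ∪ I^{-1}(𝒦) is a B/P-M set for I avoiding U. -/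
/-- `K` is a Birkhoff/Pérez-Marco set for the affine Euclidean isometry `I` (i.e. surjective
isometry of `ℝ^ℓ`) avoiding the open bounded set `U`: `K` is disjoint from `U`, `K ∪ {∞}` is
compact and connected in the one-point compactification, `K` is completely invariant under `I`,
and `K` touches the boundary of `U`. -/
def IsBPMSet {ℓ : ℕ}
    (I : EuclideanSpace ℝ (Fin ℓ) ≃ᵢ EuclideanSpace ℝ (Fin ℓ))
    (U K : Set (EuclideanSpace ℝ (Fin ℓ))) : Prop :=
  K ⊆ Uᶜ ∧
  IsCompact (OnePoint.some '' K ∪ {OnePoint.infty}) ∧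
  IsConnected (OnePoint.some '' K ∪ {OnePoint.infty}) ∧
  I '' K = K ∧ ⇑I ⁻¹' K = K ∧
  (K ∩ frontier U).Nonempty

open Set

lemma map_image_aux {X Y : Type*} (f : X → Y) (s : Set X) :
    OnePoint.map f '' (OnePoint.some '' s ∪ {OnePoint.infty})
      = OnePoint.some '' (f '' s) ∪ {OnePoint.infty} := by
  rw [image_union, image_singleton, image_image, image_image]
  rfl


/-- If `𝒦` is a B/P-M set for `I ∘ I` avoiding `𝒰 = U ∪ I(U)`, then `𝒦 ∪ I⁻¹(𝒦)` is a
B/P-M set for `I` avoiding `U`. -/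
theorem bpm_of_square {ℓ : ℕ} (hℓ : 2 ≤ ℓ)
    (I : EuclideanSpace ℝ (Fin ℓ) ≃ᵢ EuclideanSpace ℝ (Fin ℓ))
    (U : Set (EuclideanSpace ℝ (Fin ℓ)))
    (hUopen : IsOpen U) (hUbdd : Bornology.IsBounded U)
    (𝒦 : Set (EuclideanSpace ℝ (Fin ℓ)))
    (h𝒦 : IsBPMSet (I.trans I) (U ∪ ⇑I '' U) 𝒦) :
    IsBPMSet I U (𝒦 ∪ ⇑I.symm '' 𝒦) := by
  obtain ⟨hsub, hcpt, hconn, himg, hpre, hfr⟩ := h𝒦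
  -- basic facts
  have hIIimg : ⇑I '' (⇑I '' 𝒦) = 𝒦 := by
    rw [← image_comp]; exact himg
  have hIsymm : ⇑I '' 𝒦 = ⇑I.symm '' 𝒦 := by
    have := congrArg (Set.image ⇑I.symm) hIIimg
    rwa [← image_comp, I.symm_comp_self, image_id] at this
  have hKsymm_pre : ⇑I.symm '' 𝒦 = ⇑I ⁻¹' 𝒦 := by
    ext x
    constructor
    · rintro ⟨y, hy, rfl⟩; simpa using hy
    · intro hx; exact ⟨I x, hx, I.symm_apply_apply x⟩
  -- homeomorphism on one-point compactification
  set h : OnePoint (EuclideanSpace ℝ (Fin ℓ)) ≃ₜ OnePoint (EuclideanSpace ℝ (Fin ℓ)) :=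
    I.symm.toHomeomorph.onePointCongr with hh
  have himgset : h '' (OnePoint.some '' 𝒦 ∪ {OnePoint.infty})
      = OnePoint.some '' (⇑I.symm '' 𝒦) ∪ {OnePoint.infty} :=
    map_image_aux _ _
  have hsetK : OnePoint.some '' (𝒦 ∪ ⇑I.symm '' 𝒦) ∪ {OnePoint.infty}
      = (OnePoint.some '' 𝒦 ∪ {OnePoint.infty})
        ∪ (OnePoint.some '' (⇑I.symm '' 𝒦) ∪ {OnePoint.infty}) := by
    rw [image_union]; ext x; simp only [Set.mem_union, Set.mem_singleton_iff]; tauto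
  refine ⟨?_, ?_, ?_, ?_, ?_, ?_⟩
  · rintro x (hx | ⟨y, hy, rfl⟩)
    · intro hxU; exact hsub hx (Or.inl hxU)
    · intro hxU
      exact hsub hy (Or.inr ⟨I.symm y, hxU, I.apply_symm_apply y⟩)
  · rw [hsetK]
    exact hcpt.union (himgset ▸ hcpt.image h.continuous)
  · rw [hsetK]
    refine IsConnected.union ⟨OnePoint.infty, by simp, by simp⟩ hconn
      (himgset ▸ hconn.image _ h.continuous.continuousOn)
  · rw [image_union, hIsymm, ← image_comp, I.self_comp_symm, image_id]
    exact union_comm _ _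
  · have hpre' : ⇑I ⁻¹' (⇑I ⁻¹' 𝒦) = 𝒦 := hpre
    rw [preimage_union, ← hKsymm_pre, hKsymm_pre, hpre', union_comm]
  · obtain ⟨x, hx𝒦, hxfr⟩ := hfr
    rcases frontier_union_subset U (⇑I '' U) hxfr with hxU | hxIU
    · exact ⟨x, Or.inl hx𝒦, hxU.1⟩
    · refine ⟨I.symm x, Or.inr ⟨x, hx𝒦, rfl⟩, ?_⟩
      have : I.symm x ∈ ⇑I.toHomeomorph ⁻¹' frontier (⇑I '' U) := by
        simpa using hxIU.2
      rw [I.toHomeomorph.preimage_frontier] at this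
      rwa [show ⇑I.toHomeomorph ⁻¹' (⇑I '' U) = U from I.toEquiv.preimage_image U] at this
end

section
/- Let ℓ ≥ 2, let p ≥ 1, let I_0, …, I_{p−1} be affine Euclidean isometries of ℝ^ℓ, and let F : ℤ_p × ℝ^ℓ → ℤ_p × ℝ^ℓ be the cylindrical vortex F(j, v) = (j + 1, I_j v) over the cyclic shift on ℤ_p = ℤ/pℤ. Then for every tube U ⊂ ℤ_p × ℝ^ℓ (an open bounded set all of whose fibers U_j are nonempty) there exists a B/P-M set K for F avoiding U: a closed set K ⊂ (ℤ_p × ℝ^ℓ) \ U such that for each j ∈ ℤ_p the fiber K_j ∪ {∞} is compact and connected in the one-point compactification of ℝ^ℓ, F(K) = F^{-1}(K) = K, and there exists j* ∈ ℤ_p with K_{j*} ∩ ∂U_{j*} ≠ ∅. -/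
/-- `ℤ/pℤ` carries the discrete topology. -/
instance (p : ℕ) : TopologicalSpace (ZMod p) := ⊥

instance (p : ℕ) : DiscreteTopology (ZMod p) := ⟨rfl⟩

/-- `K` is a Birkhoff/Pérez-Marco set for the fibered map `F` on `Y × ℝ^ℓ` avoiding the
tube `U`: `K` is a closed set disjoint from `U`, each fiber `K_y ∪ {∞}` is compact and
connected in the one-point compactification of `ℝ^ℓ`, `K` is completely invariant under
`F`, and some fiber of `K` touches the boundary of the corresponding fiber of `U`. -/
def IsFiberedBPMSet {Y : Type*} [TopologicalSpace Y] {ℓ : ℕ}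
    (F : Equiv.Perm (Y × EuclideanSpace ℝ (Fin ℓ)))
    (U K : Set (Y × EuclideanSpace ℝ (Fin ℓ))) : Prop :=
  IsClosed K ∧
  K ⊆ Uᶜ ∧
  (∀ y : Y, IsCompact (OnePoint.some '' {v | (y, v) ∈ K} ∪ {OnePoint.infty}) ∧
    IsConnected (OnePoint.some '' {v | (y, v) ∈ K} ∪ {OnePoint.infty})) ∧
  ⇑F '' K = K ∧ ⇑F ⁻¹' K = K ∧
  ∃ y : Y, ({v | (y, v) ∈ K} ∩ frontier {v | (y, v) ∈ U}).Nonempty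

/-!
The return map `T = I_{p-1} ∘ ⋯ ∘ I_0` of the vortex to the fiber over `0` is an isometry of
`ℝ^ℓ`, hence a screw motion `v ↦ Ψ (v - c) + ρ + c` with `Ψ ρ = ρ`; so the distance `f` to its
axis `c + ℝ ρ` is `T`-invariant. Transporting `f` to the fiber over `j` by `I_{j-1} ∘ ⋯ ∘ I_0`
gives a continuous `F`-invariant function `Φ` on `ℤ/pℤ × ℝ^ℓ`. Since `ℓ ≥ 2`, from every point
`f` increases strictly along a ray perpendicular to the axis, so no fiber of `Φ` has a local
maximum. Let `s` be the maximum of `Φ` on the compact set `closure U`. Then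
`K = {Φ ≥ s}` is closed, completely invariant and disjoint from `U`; the maximum is attained on
`∂U`, and every point of `K` lies on a ray inside its fiber, so each `K_j ∪ {∞}` is connected.
-/

open Set Bornology Filter Topology

namespace OnePoint

variable {X : Type*}

theorem isCompact_image_coe_union_infty [TopologicalSpace X] {C : Set X} (hC : IsClosed C) :
    IsCompact ((↑) '' C ∪ {∞} : Set (OnePoint X)) := by
  refine IsClosed.isCompact ((isClosed_iff_of_mem (Or.inr rfl)).2 ?_)
  rwa [preimage_union, preimage_image_eq _ coe_injective, preimage_singleton_eq_empty.2
    (by simp), union_empty]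

theorem infty_mem_closure_image_coe [PseudoMetricSpace X] {S : Set X} (hS : ¬IsBounded S) :
    ∞ ∈ closure ((↑) '' S : Set (OnePoint X)) := by
  refine mem_closure_iff.2 fun o ho hinf => ?_
  by_contra hdisj
  refine hS (((isOpen_iff_of_mem hinf).1 ho).2.isBounded.subset fun x hx hxo => hdisj ?_)
  exact ⟨x, hxo, x, hx, rfl⟩

theorem isConnected_image_coe_union_infty [PseudoMetricSpace X] {C : Set X}
    (hC : ∀ x ∈ C, ∃ S ⊆ C, x ∈ S ∧ IsConnected S ∧ ¬IsBounded S) :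
    IsConnected ((↑) '' C ∪ {∞} : Set (OnePoint X)) := by
  refine ⟨⟨∞, Or.inr rfl⟩, isPreconnected_of_forall ∞ ?_⟩
  rintro _ (⟨x, hx, rfl⟩ | rfl)
  · obtain ⟨S, hSC, hxS, hS, hSunb⟩ := hC x hx
    refine ⟨(↑) '' S ∪ {∞}, union_subset_union_left _ (image_mono hSC), Or.inr rfl,
      Or.inl ⟨x, hxS, rfl⟩, ?_⟩
    exact (hS.image _ continuous_coe.continuousOn).isPreconnected.subset_closure
      subset_union_left (union_subset subset_closure
        (singleton_subset_iff.2 (infty_mem_closure_image_coe hSunb)))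
  · exact ⟨{∞}, subset_union_right, rfl, rfl, isPreconnected_singleton⟩

end OnePoint

theorem exists_mem_lt_of_not_isLocalMax {X β : Type*} [TopologicalSpace X] [LinearOrder β]
    {f : X → β} {s : Set X} {a : X} (hs : IsOpen s) (ha : a ∈ s) (hf : ¬IsLocalMax f a) :
    ∃ b ∈ s, f a < f b := by
  have := (not_eventually.1 hf).and_eventually (hs.mem_nhds ha)
  obtain ⟨b, hb, hbs⟩ := this.exists
  exact ⟨b, hbs, lt_of_not_ge hb⟩

theorem not_isLocalMax_comp_isometryEquiv {X : Type*} [PseudoEMetricSpace X] {f : X → ℝ}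
    (e : X ≃ᵢ X) {x : X} (hf : ¬IsLocalMax f (e x)) : ¬IsLocalMax (f ∘ e) x := by
  intro h
  rw [← e.symm_apply_apply x] at h
  exact hf (by simpa [Function.comp_def] using h.comp_continuous e.symm.continuous.continuousAt)

def HasUnboundedAscents {X : Type*} [PseudoMetricSpace X] (f : X → ℝ) : Prop :=
  ∀ x, ∃ S : Set X, x ∈ S ∧ IsConnected S ∧ ¬IsBounded S ∧ ∀ y ∈ S, f x ≤ f y

theorem HasUnboundedAscents.comp_isometryEquiv {X : Type*} [PseudoMetricSpace X] {f : X → ℝ}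
    (hf : HasUnboundedAscents f) (e : X ≃ᵢ X) : HasUnboundedAscents (f ∘ e) := by
  intro x
  obtain ⟨S, hxS, hS, hSunb, hSf⟩ := hf (e x)
  refine ⟨e.symm '' S, ⟨e x, hxS, e.symm_apply_apply x⟩, hS.image _ e.symm.continuous.continuousOn,
    fun hb => hSunb ?_, ?_⟩
  · simpa [image_image] using e.isometry.lipschitz.isBounded_image hb
  · rintro _ ⟨y, hy, rfl⟩
    simpa using hSf y hy

theorem HasUnboundedAscents.isConnected_superlevel {X : Type*} [PseudoMetricSpace X]
    {f : X → ℝ} (hf : HasUnboundedAscents f) (s : ℝ) :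
    IsConnected ((↑) '' {x | s ≤ f x} ∪ {OnePoint.infty} : Set (OnePoint X)) := by
  refine OnePoint.isConnected_image_coe_union_infty fun x hx => ?_
  obtain ⟨S, hxS, hS, hSunb, hSf⟩ := hf x
  exact ⟨S, fun y hy => le_trans hx (hSf y hy), hxS, hS, hSunb⟩

theorem isCompact_closure_of_isBounded_image_snd {Y E : Type*} [TopologicalSpace Y]
    [CompactSpace Y] [PseudoMetricSpace E] [ProperSpace E] {U : Set (Y × E)}
    (hU : IsBounded (Prod.snd '' U)) : IsCompact (closure U) := by
  refine (isCompact_univ.prod hU.isCompact_closure).of_isClosed_subset isClosed_closure ?_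
  rw [← closure_univ, ← closure_prod_eq]
  exact closure_mono fun x hx => ⟨trivial, x, hx, rfl⟩

theorem isOpenMap_prodMk_of_discrete {Y E : Type*} [TopologicalSpace Y] [DiscreteTopology Y]
    [TopologicalSpace E] (y : Y) : IsOpenMap (Prod.mk y : E → Y × E) := fun V hV => by
  simpa [← singleton_prod] using (isOpen_discrete {y}).prod hV

theorem exists_isFiberedBPMSet_of_invariant {Y : Type*} [TopologicalSpace Y] [DiscreteTopology Y]
    [Finite Y] {ℓ : ℕ} (F : Equiv.Perm (Y × EuclideanSpace ℝ (Fin ℓ)))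
    (Φ : Y × EuclideanSpace ℝ (Fin ℓ) → ℝ) (hΦ : Continuous Φ) (hΦF : ∀ x, Φ (F x) = Φ x)
    (hmax : ∀ y v, ¬IsLocalMax (fun u => Φ (y, u)) v)
    (hascent : ∀ y, HasUnboundedAscents fun u => Φ (y, u))
    {U : Set (Y × EuclideanSpace ℝ (Fin ℓ))} (hUopen : IsOpen U)
    (hUbdd : IsBounded (Prod.snd '' U)) (hU : U.Nonempty) :
    ∃ K, IsFiberedBPMSet F U K := by
  obtain ⟨⟨y₀, v₀⟩, hx₀, hx₀max⟩ :=
    (isCompact_closure_of_isBounded_image_snd hUbdd).exists_isMaxOn hU.closure hΦ.continuousOn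
  have hascentU : ∀ x ∈ U, ∃ x' ∈ U, Φ x < Φ x' := by
    rintro ⟨y, v⟩ hx
    obtain ⟨v', hv', hlt⟩ := exists_mem_lt_of_not_isLocalMax
      (hUopen.preimage (Continuous.prodMk_right y)) hx (hmax y v)
    exact ⟨(y, v'), hv', hlt⟩
  have hltU : ∀ x ∈ U, Φ x < Φ (y₀, v₀) := fun x hx => by
    obtain ⟨x', hx', hlt⟩ := hascentU x hx
    exact hlt.trans_le (hx₀max (subset_closure hx'))
  set K := {x | Φ (y₀, v₀) ≤ Φ x}
  have hpre : F ⁻¹' K = K := by ext x; simp [K, hΦF]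
  refine ⟨K, isClosed_le continuous_const hΦ,
    fun x hxK hxU => (hltU x hxU).not_ge hxK, fun y => ⟨?_, (hascent y).isConnected_superlevel _⟩,
    ?_, ?_, y₀, v₀, le_refl (Φ (y₀, v₀)), ?_⟩
  · exact OnePoint.isCompact_image_coe_union_infty
      (isClosed_le continuous_const (hΦ.comp (Continuous.prodMk_right y)))
  · nth_rw 1 [← hpre]; exact F.image_preimage K
  · exact hpre
  · show v₀ ∈ frontier (Prod.mk y₀ ⁻¹' U)
    rw [(hUopen.preimage (Continuous.prodMk_right y₀)).frontier_eq,
      ← (isOpenMap_prodMk_of_discrete y₀).preimage_closure_eq_closure_preimage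
        (Continuous.prodMk_right y₀)]
    exact ⟨hx₀, fun h => (hltU _ h).false⟩

section Rays

variable {F : Type*} [NormedAddCommGroup F] [NormedSpace ℝ F] {f : F → ℝ}

theorem not_isLocalMax_of_forall_lt_add_smul {v w : F} (h : ∀ t > (0 : ℝ), f v < f (v + t • w)) :
    ¬IsLocalMax f v := by
  intro hmax
  have hline : IsLocalMax (fun t : ℝ => f (v + t • w)) 0 :=
    IsLocalMax.comp_continuous (g := fun t : ℝ => v + t • w) (by simpa using hmax)
      (by fun_prop : Continuous fun t : ℝ => v + t • w).continuousAt
  obtain ⟨t, hle, ht⟩ :=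
    ((hline.filter_mono nhdsWithin_le_nhds).and (self_mem_nhdsWithin (s := Ioi 0))).exists
  simp only [zero_smul, add_zero] at hle
  exact (h t ht).not_ge hle

theorem hasUnboundedAscents_of_forall_lt_add_smul
    (h : ∀ v, ∃ w ≠ (0 : F), ∀ t > (0 : ℝ), f v < f (v + t • w)) : HasUnboundedAscents f := by
  intro v
  obtain ⟨w, hw0, hw⟩ := h v
  have hw' : 0 < ‖w‖ := norm_pos_iff.2 hw0
  refine ⟨(fun t : ℝ => v + t • w) '' Ici 0, ⟨0, mem_Ici.2 le_rfl, by simp⟩,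
    isConnected_Ici.image _ (by fun_prop), fun hb => ?_, ?_⟩
  · obtain ⟨r, hr⟩ := (Metric.isBounded_iff_subset_closedBall v).1 hb
    have hmem := hr ⟨(|r| + 1) / ‖w‖, mem_Ici.2 (by positivity), rfl⟩
    rw [Metric.mem_closedBall, dist_eq_norm, add_sub_cancel_left, norm_smul, Real.norm_of_nonneg
      (by positivity), div_mul_cancel₀ _ hw'.ne'] at hmem
    linarith [le_abs_self r]
  · rintro _ ⟨t, ht, rfl⟩
    rcases (mem_Ici.1 ht).eq_or_lt with rfl | ht
    · simp
    · exact (hw t ht).le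

end Rays

section Euclidean

variable {E : Type*} [NormedAddCommGroup E] [InnerProductSpace ℝ E]

theorem LinearIsometryEquiv.apply_eq_self_of_mem_orthogonal_range (Ψ : E ≃ₗᵢ[ℝ] E) {x : E}
    (hx : x ∈ (LinearMap.range (Ψ.toLinearMap - LinearMap.id))ᗮ) : Ψ x = x := by
  have h₁ : inner ℝ (Ψ x - x) x = 0 := hx _ ⟨x, rfl⟩
  have h₂ : inner ℝ (Ψ x - x) (Ψ x - x) = 0 := by
    rw [inner_sub_left, inner_sub_right, inner_sub_right, Ψ.inner_map_map, real_inner_comm (Ψ x) x]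
    rw [inner_sub_left] at h₁
    linarith
  exact sub_eq_zero.1 (inner_self_eq_zero.1 h₂)

theorem IsometryEquiv.exists_eq_screw [FiniteDimensional ℝ E] (T : E ≃ᵢ E) :
    ∃ (Ψ : E ≃ₗᵢ[ℝ] E) (ρ c : E), Ψ ρ = ρ ∧ ∀ v, T v = Ψ (v - c) + ρ + c := by
  set Ψ := T.toRealLinearIsometryEquiv
  set R := LinearMap.range (Ψ.toLinearMap - LinearMap.id)
  obtain ⟨w, hw⟩ : R.starProjection (T 0) ∈ R := R.starProjection_apply_mem _
  refine ⟨Ψ, T 0 - R.starProjection (T 0), -w,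
    Ψ.apply_eq_self_of_mem_orthogonal_range (R.sub_starProjection_mem_orthogonal _), fun v => ?_⟩
  simp only [LinearMap.sub_apply, LinearMap.id_apply, LinearEquiv.coe_coe,
    LinearIsometryEquiv.coe_toLinearEquiv] at hw
  rw [sub_neg_eq_add, map_add, ← hw, T.toRealLinearIsometryEquiv_apply]
  abel

theorem LinearIsometryEquiv.starProjection_apply_comm (Ψ : E ≃ₗᵢ[ℝ] E) {K : Submodule ℝ E}
    [K.HasOrthogonalProjection] (hK : K.map Ψ.toLinearEquiv.toLinearMap = K) (x : E) :
    K.starProjection (Ψ x) = Ψ (K.starProjection x) := by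
  have := Submodule.starProjection_map_apply Ψ K (Ψ x)
  simp only [hK, LinearIsometryEquiv.symm_apply_apply] at this
  exact this

theorem Submodule.orthogonal_span_singleton_ne_bot [FiniteDimensional ℝ E]
    (hE : 2 ≤ Module.finrank ℝ E) (ρ : E) : (ℝ ∙ ρ)ᗮ ≠ ⊥ := by
  intro h
  have hsum := (ℝ ∙ ρ).finrank_add_finrank_orthogonal
  have hspan : Module.finrank ℝ (ℝ ∙ ρ) ≤ 1 := by
    simpa using finrank_span_le_card ({ρ} : Set E)
  rw [h, finrank_bot, add_zero] at hsum
  omega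

/-- The distance from `v` to the line `c + ℝ ρ` (to the point `c` if `ρ = 0`). -/
noncomputable def axisDist (ρ c v : E) : ℝ :=
  ‖(ℝ ∙ ρ)ᗮ.starProjection (v - c)‖

variable {ρ c : E}

theorem continuous_axisDist : Continuous (axisDist ρ c) :=
  ((ℝ ∙ ρ)ᗮ.starProjection.continuous.comp (continuous_id.sub continuous_const)).norm

theorem axisDist_screw {Ψ : E ≃ₗᵢ[ℝ] E} (hΨ : Ψ ρ = ρ) (v : E) :
    axisDist ρ c (Ψ (v - c) + ρ + c) = axisDist ρ c v := by
  have hK : (ℝ ∙ ρ)ᗮ.map Ψ.toLinearEquiv.toLinearMap = (ℝ ∙ ρ)ᗮ := by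
    rw [Submodule.map_orthogonal_equiv, Submodule.map_span, image_singleton]
    simp [hΨ]
  simp only [axisDist, add_sub_cancel_right, map_add,
    Submodule.starProjection_orthogonalComplement_singleton_eq_zero, add_zero,
    Ψ.starProjection_apply_comm hK, LinearIsometryEquiv.norm_map]

theorem axisDist_add_smul {v w : E} (hw : w ∈ (ℝ ∙ ρ)ᗮ)
    (hray : SameRay ℝ ((ℝ ∙ ρ)ᗮ.starProjection (v - c)) w) {t : ℝ} (ht : 0 ≤ t) :
    axisDist ρ c (v + t • w) = axisDist ρ c v + t * ‖w‖ := by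
  rw [axisDist, add_sub_right_comm, map_add, map_smul, Submodule.starProjection_eq_self_iff.2 hw,
    (hray.nonneg_smul_right ht).norm_add, norm_smul, Real.norm_of_nonneg ht, axisDist]

theorem exists_forall_axisDist_lt_add_smul (hρ : (ℝ ∙ ρ)ᗮ ≠ ⊥) (v : E) :
    ∃ w ≠ 0, ∀ t > (0 : ℝ), axisDist ρ c v < axisDist ρ c (v + t • w) := by
  set y := (ℝ ∙ ρ)ᗮ.starProjection (v - c)
  obtain ⟨w, hwK, hw0, hray⟩ : ∃ w ∈ (ℝ ∙ ρ)ᗮ, w ≠ 0 ∧ SameRay ℝ y w := by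
    by_cases hy : y = 0
    · obtain ⟨w, hwK, hw0⟩ := Submodule.exists_mem_ne_zero_of_ne_bot hρ
      exact ⟨w, hwK, hw0, hy ▸ SameRay.zero_left w⟩
    · exact ⟨y, Submodule.starProjection_apply_mem _ _, hy, SameRay.rfl⟩
  refine ⟨w, hw0, fun t ht => ?_⟩
  rw [axisDist_add_smul hwK hray ht.le]
  exact lt_add_of_pos_right _ (mul_pos ht (norm_pos_iff.2 hw0))

end Euclidean

section Cocycle

variable {X : Type*} [PseudoEMetricSpace X] {p : ℕ}

/-- `skewCocycle I n = I (n - 1) * ⋯ * I 0`: the fiber component of the `n`-th iterate of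
`(j, v) ↦ (j + 1, I j v)` started in the fiber over `0`. -/
def skewCocycle (I : ZMod p → X ≃ᵢ X) : ℕ → X ≃ᵢ X
  | 0 => 1
  | n + 1 => I n * skewCocycle I n

theorem skewCocycle_add_period (I : ZMod p → X ≃ᵢ X) (n : ℕ) :
    skewCocycle I (n + p) = skewCocycle I n * skewCocycle I p := by
  induction n with
  | zero => rw [zero_add, skewCocycle, one_mul]
  | succ n ih =>
    rw [Nat.add_right_comm, skewCocycle, ih, skewCocycle, mul_assoc, Nat.cast_add,
      ZMod.natCast_self, add_zero]

theorem comp_skewCocycle_inv_succ [NeZero p] {β : Type*} {f : X → β} (I : ZMod p → X ≃ᵢ X)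
    (hf : ∀ x, f (skewCocycle I p x) = f x) (j : ZMod p) (x : X) :
    f ((skewCocycle I (j + 1).val)⁻¹ (I j x)) = f ((skewCocycle I j.val)⁻¹ x) := by
  have hper : Function.Periodic (fun n => f ∘ ⇑(skewCocycle I n)⁻¹) p := fun n => by
    funext y
    simpa [skewCocycle_add_period, mul_inv_rev, IsometryEquiv.mul_apply] using
      (hf ((skewCocycle I p)⁻¹ ((skewCocycle I n)⁻¹ y))).symm
  have hval : (j + 1).val = (j.val + 1) % p := by
    rw [← ZMod.val_natCast, Nat.cast_add, Nat.cast_one, ZMod.natCast_zmod_val]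
  have hmod := congrFun (hper.map_mod_nat (j.val + 1)) (I j x)
  simp only [Function.comp_apply] at hmod
  rw [hval, hmod]
  simp [skewCocycle, mul_inv_rev, IsometryEquiv.mul_apply]

end Cocycle

/-- For the cylindrical vortex `F(j,v) = (j+1, I_j v)` over the cyclic shift on `ℤ/pℤ`
(given by affine Euclidean isometries `I_j` of `ℝ^ℓ`, `ℓ ≥ 2`), every tube `U` admits a
B/P-M set avoiding it. -/
theorem exists_fibered_bpm_set_over_cyclic {ℓ : ℕ} (hℓ : 2 ≤ ℓ) (p : ℕ) (hp : 1 ≤ p)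
    (I : ZMod p → (EuclideanSpace ℝ (Fin ℓ) ≃ᵢ EuclideanSpace ℝ (Fin ℓ)))
    (F : Equiv.Perm (ZMod p × EuclideanSpace ℝ (Fin ℓ)))
    (hF : ∀ (j : ZMod p) (v : EuclideanSpace ℝ (Fin ℓ)), F (j, v) = (j + 1, I j v))
    (U : Set (ZMod p × EuclideanSpace ℝ (Fin ℓ)))
    (hUopen : IsOpen U) (hUbdd : Bornology.IsBounded (Prod.snd '' U))
    (hUfibers : ∀ j : ZMod p, {v | (j, v) ∈ U}.Nonempty) :
    ∃ K : Set (ZMod p × EuclideanSpace ℝ (Fin ℓ)), IsFiberedBPMSet F U K := by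
  have : NeZero p := ⟨by omega⟩
  obtain ⟨Ψ, ρ, c, hΨρ, hT⟩ := (skewCocycle I p).exists_eq_screw
  have hρ : (ℝ ∙ ρ)ᗮ ≠ ⊥ := Submodule.orthogonal_span_singleton_ne_bot (by simpa using hℓ) ρ
  have hrays := exists_forall_axisDist_lt_add_smul (c := c) hρ
  obtain ⟨v₀, hv₀⟩ := hUfibers 0
  have hΦ : Continuous fun x : ZMod p × EuclideanSpace ℝ (Fin ℓ) =>
      axisDist ρ c ((skewCocycle I x.1.val)⁻¹ x.2) := by
    refine continuous_prod_of_discrete_left.2 fun j => ?_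
    exact continuous_axisDist.comp (skewCocycle I j.val)⁻¹.continuous
  refine exists_isFiberedBPMSet_of_invariant F _ hΦ (fun x => ?_) (fun j v => ?_) (fun j => ?_)
    hUopen hUbdd ⟨(0, v₀), hv₀⟩
  · obtain ⟨j, v⟩ := x
    rw [hF]
    exact comp_skewCocycle_inv_succ I (fun v => by rw [hT]; exact axisDist_screw hΨρ v) j v
  · obtain ⟨w, -, hw⟩ := hrays ((skewCocycle I j.val)⁻¹ v)
    exact not_isLocalMax_comp_isometryEquiv (skewCocycle I j.val)⁻¹
      (not_isLocalMax_of_forall_lt_add_smul hw)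
  · exact (hasUnboundedAscents_of_forall_lt_add_smul hrays).comp_isometryEquiv
      (skewCocycle I j.val)⁻¹
end

section
/- Let α, β ∈ ℝ be such that 1, α, β are linearly independent over ℚ, let ρ : 𝕋¹ → ℂ be continuous, and define ρ_n : 𝕋¹ → ℂ by ρ_n(x) = Σ_{k=0}^{n−1} e^{2πi(n−k−1)β} ρ(x + kα) (so that F^n(x,z) = (x + nα, e^{2πinβ} z + ρ_n(x)) for the map F(x,z) = (x + α, e^{2πiβ} z + ρ(x)) on 𝕋¹ × ℂ). Then F has zero drift: sup_{x∈𝕋¹} |ρ_n(x)|/n → 0 as n → +∞. -/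
/-!
Up to the unimodular factor `e^{2πi(n-1)β}`, `ρ_n(x)` is the twisted Birkhoff sum
`∑_{k<n} u^k ρ(x + kα)` with `u = e^{-2πiβ}`. For a character `e_m` this sum is
`e_m(x)` times a geometric sum of ratio `u e_m(α) = e^{2πi(mα - β)}`, which is `≠ 1` by the
rational independence of `1, α, β`; hence it is bounded in `n`. Bounded twisted sums form a
subspace containing all trigonometric polynomials, which are uniformly dense, and twisted sums
of a function of sup norm `d` are at most `n d`; so `‖ρ_n‖_∞ / n → 0`.
-/

open Real Finset Filter

noncomputable def twistedSum {X : Type*} [AddMonoid X] (u : ℂ) (a : X) (f : X → ℂ) (n : ℕ) (x : X) :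
    ℂ :=
  ∑ k ∈ range n, u ^ k * f (x + k • a)

section TwistedSum

variable {X : Type*} [AddMonoid X] {u : ℂ} {a : X}

lemma twistedSum_add (f g : X → ℂ) (n : ℕ) (x : X) :
    twistedSum u a (f + g) n x = twistedSum u a f n x + twistedSum u a g n x := by
  simp only [twistedSum, Pi.add_apply, mul_add, sum_add_distrib]

lemma twistedSum_smul (c : ℂ) (f : X → ℂ) (n : ℕ) (x : X) :
    twistedSum u a (c • f) n x = c * twistedSum u a f n x := by
  simp only [twistedSum, Pi.smul_apply, smul_eq_mul, mul_sum, mul_left_comm]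

lemma norm_twistedSum_le (hu : ‖u‖ ≤ 1) {f : X → ℂ} {d : ℝ} (hf : ∀ y, ‖f y‖ ≤ d)
    (n : ℕ) (x : X) : ‖twistedSum u a f n x‖ ≤ n * d := by
  calc ‖twistedSum u a f n x‖ ≤ ∑ k ∈ range n, ‖u ^ k * f (x + k • a)‖ := norm_sum_le _ _
    _ ≤ ∑ _k ∈ range n, d := by
        gcongr with k
        rw [norm_mul, norm_pow]
        exact (mul_le_mul (pow_le_one₀ (norm_nonneg u) hu) (hf _) (norm_nonneg _)
          zero_le_one).trans_eq (one_mul d)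
    _ = n * d := by rw [sum_const, card_range, nsmul_eq_mul]

end TwistedSum

section BoundedTwistedSums

variable {X : Type*} [TopologicalSpace X] [AddMonoid X] (u : ℂ) (a : X)

def boundedTwistedSums : Submodule ℂ C(X, ℂ) where
  carrier := {f | ∃ C, ∀ n x, ‖twistedSum u a f n x‖ ≤ C}
  zero_mem' := ⟨0, fun n x => by simp [twistedSum]⟩
  add_mem' := by
    rintro f g ⟨C, hC⟩ ⟨D, hD⟩
    refine ⟨C + D, fun n x => ?_⟩
    rw [ContinuousMap.coe_add, twistedSum_add]
    exact (norm_add_le _ _).trans (add_le_add (hC n x) (hD n x))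
  smul_mem' := by
    rintro c f ⟨C, hC⟩
    refine ⟨‖c‖ * C, fun n x => ?_⟩
    rw [ContinuousMap.coe_smul, twistedSum_smul, norm_mul]
    exact mul_le_mul_of_nonneg_left (hC n x) (norm_nonneg c)

variable {u a}

lemma eventually_norm_twistedSum_div_lt [CompactSpace X] (hu : ‖u‖ ≤ 1) {f : C(X, ℂ)}
    (hf : f ∈ closure (boundedTwistedSums u a : Set C(X, ℂ))) {ε : ℝ} (hε : 0 < ε) :
    ∀ᶠ n : ℕ in atTop, ∀ x, ‖twistedSum u a f n x‖ / n < ε := by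
  obtain ⟨P, ⟨C, hC⟩, hfP⟩ := Metric.mem_closure_iff.mp hf (ε / 2) (half_pos hε)
  rw [dist_eq_norm] at hfP
  have hsmall : ∀ᶠ n : ℕ in atTop, C / n < ε / 2 :=
    (tendsto_const_div_atTop_nhds_zero_nat C).eventually (gt_mem_nhds (half_pos hε))
  filter_upwards [hsmall, eventually_gt_atTop 0] with n hn hn0 x
  have hsplit : twistedSum u a f n x = twistedSum u a P n x + twistedSum u a ⇑(f - P) n x := by
    rw [← twistedSum_add, ContinuousMap.coe_sub, add_sub_cancel]
  have hbound : ‖twistedSum u a f n x‖ ≤ C + n * ‖f - P‖ := by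
    rw [hsplit]
    exact (norm_add_le _ _).trans (add_le_add (hC n x)
      (norm_twistedSum_le hu (ContinuousMap.norm_coe_le_norm _) n x))
  have hn0' : (0 : ℝ) < n := Nat.cast_pos.mpr hn0
  calc ‖twistedSum u a f n x‖ / n ≤ (C + n * ‖f - P‖) / n := by gcongr
    _ = C / n + ‖f - P‖ := by field_simp
    _ < ε := by linarith

end BoundedTwistedSums

section Fourier

variable {T : ℝ} {u : ℂ} {a : AddCircle T}

lemma fourier_add_nsmul (m : ℤ) (x : AddCircle T) (k : ℕ) :
    fourier m (x + k • a) = fourier m x * fourier m a ^ k := by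
  simp only [fourier_apply, smul_add, smul_comm m k a, AddCircle.toCircle_add,
    AddCircle.toCircle_nsmul, Circle.coe_mul, Circle.coe_pow]

lemma norm_geom_sum_le {r : ℂ} (hr : ‖r‖ ≤ 1) (hr1 : r ≠ 1) (n : ℕ) :
    ‖∑ k ∈ range n, r ^ k‖ ≤ 2 / ‖r - 1‖ := by
  rw [geom_sum_eq hr1, norm_div]
  gcongr
  calc ‖r ^ n - 1‖ ≤ ‖r ^ n‖ + ‖(1 : ℂ)‖ := norm_sub_le _ _
    _ ≤ 1 + 1 := by
        rw [norm_pow, norm_one]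
        gcongr
        exact pow_le_one₀ (norm_nonneg r) hr
    _ = 2 := one_add_one_eq_two

lemma fourier_mem_boundedTwistedSums (hu : ‖u‖ ≤ 1) {m : ℤ} (hres : u * fourier m a ≠ 1) :
    fourier m ∈ boundedTwistedSums u a := by
  set r := u * fourier m a
  have hr : ‖r‖ ≤ 1 := by rwa [norm_mul, fourier_apply, Circle.norm_coe, mul_one]
  refine ⟨2 / ‖r - 1‖, fun n x => ?_⟩
  have hsum : twistedSum u a (fourier m) n x = (∑ k ∈ range n, r ^ k) * fourier m x := by
    simp only [twistedSum, fourier_add_nsmul, sum_mul, r, mul_pow]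
    exact sum_congr rfl fun k _ => by ring
  rw [hsum, norm_mul, fourier_apply, Circle.norm_coe, mul_one]
  exact norm_geom_sum_le hr hres n

lemma mem_closure_boundedTwistedSums [Fact (0 < T)] (hu : ‖u‖ ≤ 1)
    (hres : ∀ m : ℤ, u * fourier m a ≠ 1) (f : C(AddCircle T, ℂ)) :
    f ∈ closure (boundedTwistedSums u a : Set C(AddCircle T, ℂ)) := by
  have hspan : Submodule.span ℂ (Set.range fourier) ≤ boundedTwistedSums u a :=
    Submodule.span_le.mpr <| Set.range_subset_iff.mpr fun m =>
      fourier_mem_boundedTwistedSums hu (hres m)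
  have hdense := Submodule.topologicalClosure_mono hspan
  rw [span_fourier_closure_eq_top, top_le_iff] at hdense
  rw [← Submodule.topologicalClosure_coe, hdense]
  trivial

end Fourier

lemma intCast_mul_sub_ne_intCast {α β : ℝ} (hindep : LinearIndependent ℚ ![(1 : ℝ), α, β])
    (m j : ℤ) : m * α - β ≠ j := by
  intro h
  have := Fintype.linearIndependent_iff.mp hindep ![(j : ℚ), -(m : ℚ), 1] (by
    simp only [Fin.sum_univ_three, Rat.smul_def, Matrix.cons_val_zero, Matrix.cons_val_one,
      Matrix.cons_val, Rat.cast_intCast, Rat.cast_neg, Rat.cast_one, mul_one, one_mul, neg_mul]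
    linarith)
  simpa using this 2

lemma exp_neg_mul_fourier_ne_one {α β : ℝ} (hindep : LinearIndependent ℚ ![(1 : ℝ), α, β])
    (m : ℤ) : Complex.exp (-(2 * π * Complex.I * β)) * fourier m (α : AddCircle (1 : ℝ)) ≠ 1 := by
  rw [fourier_coe_apply, Complex.ofReal_one, div_one, ← Complex.exp_add, Ne,
    Complex.exp_eq_one_iff]
  rintro ⟨j, hj⟩
  apply intCast_mul_sub_ne_intCast hindep m j
  have h2πI : 2 * π * Complex.I ≠ 0 := by simp [pi_ne_zero]
  have : ((m * α - β : ℝ) : ℂ) = j := by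
    apply mul_left_cancel₀ h2πI
    push_cast
    linear_combination hj
  exact_mod_cast this

lemma norm_sum_exp_mul_eq (β : ℝ) (n : ℕ) (g : ℕ → ℂ) :
    ‖∑ k ∈ range n, Complex.exp (2 * π * Complex.I * (((n : ℂ) - (k : ℂ) - 1) * (β : ℂ))) * g k‖
      = ‖∑ k ∈ range n, Complex.exp (-(2 * π * Complex.I * β)) ^ k * g k‖ := by
  have hfactor : ∀ k : ℕ, Complex.exp (2 * π * Complex.I * (((n : ℂ) - (k : ℂ) - 1) * (β : ℂ)))
      = Complex.exp (2 * π * Complex.I * (((n : ℂ) - 1) * β))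
        * Complex.exp (-(2 * π * Complex.I * β)) ^ k := fun k => by
    rw [← Complex.exp_nat_mul, ← Complex.exp_add]
    ring_nf
  simp_rw [hfactor, mul_assoc, ← mul_sum, norm_mul, Complex.norm_exp]
  simp

/-- The cylindrical vortex `F(x,z) = (x + α, e^{2πiβ} z + ρ(x))` on `𝕋¹ × ℂ`, with
`1, α, β` rationally independent and `ρ` continuous, has zero drift:
`sup_x |ρ_n(x)|/n → 0` as `n → +∞`, where
`ρ_n(x) = Σ_{k=0}^{n-1} e^{2πi(n-k-1)β} ρ(x + kα)`. -/
theorem vortex_zero_drift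
    (α β : ℝ) (hindep : LinearIndependent ℚ ![(1 : ℝ), α, β])
    (ρ : AddCircle (1 : ℝ) → ℂ) (hρ : Continuous ρ) :
    ∀ ε : ℝ, 0 < ε → ∃ N : ℕ, ∀ n : ℕ, N ≤ n → ∀ x : AddCircle (1 : ℝ),
      ‖∑ k ∈ Finset.range n,
        Complex.exp (2 * π * Complex.I * (((n : ℂ) - (k : ℂ) - 1) * (β : ℂ))) *
          ρ (x + k • (α : AddCircle (1 : ℝ)))‖ / (n : ℝ) < ε := by
  intro ε hε
  have hu : ‖Complex.exp (-(2 * π * Complex.I * β))‖ ≤ 1 := by simp [Complex.norm_exp]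
  have hdense := mem_closure_boundedTwistedSums hu (exp_neg_mul_fourier_ne_one hindep) ⟨ρ, hρ⟩
  obtain ⟨N, hN⟩ := eventually_atTop.mp (eventually_norm_twistedSum_div_lt hu hdense hε)
  exact ⟨N, fun n hn x => by rw [norm_sum_exp_mul_eq]; exact hN n hn x⟩
end

section
/- Let α, β ∈ ℝ and let ρ : 𝕋¹ → ℂ be continuous. Then the following are equivalent: (i) there exists a continuous function φ* : 𝕋¹ → ℂ satisfying φ*(x + α) = e^{2πiβ} φ*(x) + ρ(x) for all x ∈ 𝕋¹; (ii) there exists a continuous function φ : 𝕋² → ℂ satisfying φ(x + α, y − β) = φ(x, y) + e^{2πi(y−β)} ρ(x) for all (x,y) ∈ 𝕋². -/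
/-!
Writing `e` for the character `y ↦ e^{2πiy}`, a solution `φ*` of the vortex equation gives the
solution `φ(x, y) = e(y) φ*(x)` of the cascade equation, because `e(y - β) e^{2πiβ} = e(y)`.
Conversely, the first Fourier coefficient in `y` of a solution `φ`,
`φ*(x) = ∫ e(-y) φ(x, y) dy`, solves the vortex equation: substitute `y ↦ y - β` in the integral
and use that the Haar measure is translation invariant and has total mass one.
-/

open Real MeasureTheory

section Reducibility

variable {X G : Type*} [TopologicalSpace X] [AddCommGroup G] [TopologicalSpace G]

/-- The vortex `(x, z) ↦ (T x, c z + ρ x)` has the continuous invariant graph `z = ψ x`. -/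
def VortexReducible (T : X → X) (c : ℂ) (ρ : X → ℂ) : Prop :=
  ∃ ψ : X → ℂ, Continuous ψ ∧ ∀ x, ψ (T x) = c * ψ x + ρ x

/-- The cascade `((x, y), z) ↦ ((T x, y - b), z + χ (y - b) ρ x)` has the continuous invariant
graph `z = φ (x, y)`. -/
def CascadeReducible (T : X → X) (χ : G → ℂ) (b : G) (ρ : X → ℂ) : Prop :=
  ∃ φ : X × G → ℂ, Continuous φ ∧ ∀ x y, φ (T x, y - b) = φ (x, y) + χ (y - b) * ρ x

theorem CascadeReducible.of_vortexReducible [IsTopologicalAddGroup G] {χ : AddChar G ℂ}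
    (hχ : Continuous χ) {T : X → X} {b : G} {ρ : X → ℂ} (h : VortexReducible T (χ b) ρ) :
    CascadeReducible T χ b ρ := by
  obtain ⟨ψ, hψ, hψT⟩ := h
  refine ⟨fun p ↦ χ p.2 * ψ p.1, by fun_prop, fun x y ↦ ?_⟩
  have hχy : χ (y - b) * χ b = χ y := by rw [← AddChar.map_add_eq_mul, sub_add_cancel]
  simp only [hψT]
  linear_combination ψ x * hχy

theorem VortexReducible.of_cascadeReducible [IsTopologicalAddGroup G] [CompactSpace G]
    [FirstCountableTopology X] [LocallyCompactSpace X] [MeasurableSpace G] [BorelSpace G]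
    (μ : Measure G) [IsProbabilityMeasure μ] [μ.IsAddRightInvariant] {χ : AddChar G ℂ}
    (hχ : Continuous χ) {T : X → X} {b : G} {ρ : X → ℂ} (h : CascadeReducible T χ b ρ) :
    VortexReducible T (χ b) ρ := by
  obtain ⟨φ, hφ, hφT⟩ := h
  have hcont : Continuous (Function.uncurry fun x y ↦ χ (-y) * φ (x, y)) := by fun_prop
  refine ⟨fun x ↦ ∫ y, χ (-y) * φ (x, y) ∂μ, ?_, fun x ↦ ?_⟩
  · simpa using continuous_parametric_integral_of_continuous (μ := μ) hcont isCompact_univ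
  have hint : Integrable (fun y ↦ χ (-y) * φ (x, y)) μ :=
    (hcont.comp (.prodMk_right x)).integrable_of_hasCompactSupport (.of_compactSpace _)
  have hpt : ∀ y, χ (-(y - b)) * φ (T x, y - b) = χ b * (χ (-y) * φ (x, y)) + ρ x := by
    intro y
    have hshift : χ (-(y - b)) = χ b * χ (-y) := by
      rw [← AddChar.map_add_eq_mul, neg_sub, sub_eq_add_neg]
    have hinv : χ (-(y - b)) * χ (y - b) = 1 := by
      rw [← AddChar.map_add_eq_mul, neg_add_cancel, AddChar.map_zero_eq_one]
    rw [hφT]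
    linear_combination φ (x, y) * hshift + ρ x * hinv
  calc ∫ y, χ (-y) * φ (T x, y) ∂μ
      = ∫ y, χ (-(y - b)) * φ (T x, y - b) ∂μ :=
        (integral_sub_right_eq_self (fun y ↦ χ (-y) * φ (T x, y)) b).symm
    _ = ∫ y, χ b * (χ (-y) * φ (x, y)) + ρ x ∂μ := by simp only [hpt]
    _ = χ b * ∫ y, χ (-y) * φ (x, y) ∂μ + ρ x := by
        rw [integral_add (hint.const_mul _) (integrable_const _), integral_const_mul,
          integral_const, probReal_univ, one_smul]

end Reducibility

noncomputable def AddCircle.expChar : AddChar (AddCircle (1 : ℝ)) ℂ where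
  toFun x := toCircle x
  map_zero_eq_one' := by simp [toCircle_zero]
  map_add_eq_mul' x y := by simp [toCircle_add]

theorem AddCircle.continuous_expChar : Continuous expChar :=
  continuous_subtype_val.comp continuous_toCircle

theorem AddCircle.eq_expChar {e : AddCircle (1 : ℝ) → ℂ}
    (he : ∀ t : ℝ, e t = Complex.exp (2 * π * Complex.I * t)) : e = expChar := by
  ext x
  induction x using QuotientAddGroup.induction_on with
  | H t =>
    simp only [he, expChar, AddChar.coe_mk, toCircle_apply_mk, Circle.coe_exp]
    push_cast
    ring_nf

theorem vortex_reducible_iff_cascade_reducible_general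
    (α β : ℝ) (ρ : AddCircle (1 : ℝ) → ℂ)
    (e : AddCircle (1 : ℝ) → ℂ)
    (he : ∀ t : ℝ, e (t : AddCircle (1 : ℝ)) = Complex.exp (2 * π * Complex.I * t)) :
    (∃ φs : AddCircle (1 : ℝ) → ℂ, Continuous φs ∧
        ∀ x : AddCircle (1 : ℝ),
          φs (x + (α : AddCircle (1 : ℝ))) = Complex.exp (2 * π * Complex.I * β) * φs x + ρ x)
    ↔
    (∃ φ : AddCircle (1 : ℝ) × AddCircle (1 : ℝ) → ℂ, Continuous φ ∧
        ∀ x y : AddCircle (1 : ℝ),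
          φ (x + (α : AddCircle (1 : ℝ)), y - (β : AddCircle (1 : ℝ)))
            = φ (x, y) + e (y - (β : AddCircle (1 : ℝ))) * ρ x) := by
  rw [← he β]
  obtain rfl := AddCircle.eq_expChar he
  exact ⟨CascadeReducible.of_vortexReducible AddCircle.continuous_expChar,
    VortexReducible.of_cascadeReducible AddCircle.haarAddCircle AddCircle.continuous_expChar⟩

/-- The cylindrical vortex `F(x,z) = (x + α, e^{2πiβ} z + ρ(x))` on `𝕋¹ × ℂ` is reducible
if and only if the cylindrical cascade `G((x,y),z) = ((x + α, y - β), z + e^{2πi(y-β)} ρ(x))`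
on `𝕋² × ℂ` is reducible.  Here `e : 𝕋¹ → ℂ` denotes the character `t ↦ e^{2πit}`. -/
theorem vortex_reducible_iff_cascade_reducible
    (α β : ℝ) (ρ : AddCircle (1 : ℝ) → ℂ) (hρ : Continuous ρ)
    (e : AddCircle (1 : ℝ) → ℂ)
    (he : ∀ t : ℝ, e (t : AddCircle (1 : ℝ)) = Complex.exp (2 * π * Complex.I * t)) :
    (∃ φs : AddCircle (1 : ℝ) → ℂ, Continuous φs ∧
        ∀ x : AddCircle (1 : ℝ),
          φs (x + (α : AddCircle (1 : ℝ))) = Complex.exp (2 * π * Complex.I * β) * φs x + ρ x)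
    ↔
    (∃ φ : AddCircle (1 : ℝ) × AddCircle (1 : ℝ) → ℂ, Continuous φ ∧
        ∀ x y : AddCircle (1 : ℝ),
          φ (x + (α : AddCircle (1 : ℝ)), y - (β : AddCircle (1 : ℝ)))
            = φ (x, y) + e (y - (β : AddCircle (1 : ℝ))) * ρ x) :=
  vortex_reducible_iff_cascade_reducible_general α β ρ e he
end

section
/- For each integer q ≥ 1 set t(q) := ⌊q^{1/3}⌋ and r(q) := ⌊q^{1/2}⌋, and let p(q) ∈ {1, …, q−1} be the inverse of t(q) modulo q when t(q) and q are coprime, and p(q) := 0 otherwise. Let FS_q(2,3) := { (s·p(q)/q mod 1, s·p(q)·r(q)/q mod 1) : 1 ≤ s ≤ 2t(q) } ⊂ [0,1)², and FS(2,3) := ⋃_{q≥1} FS_q(2,3). Then FS(2,3) is dense in [0,1]² (equivalently, dense in the 2-torus 𝕋²). -/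
/-!
Fix a prime `d` and a grid point `(a/d, b/d)` with `0 < a < d` and `b < d`. Choose
`r ∈ [d³, d³ + d)` with `a r ≡ b (mod d)` and a modulus `q ≡ -1 (mod d²)` with
`r² ≤ q < r² + d²`. Then `t(q) = d²`, `r(q) = r` and `p(q) = (q + 1)/d²`, so for
`s = a d ≤ 2 t(q)` the point of `FS_q(2,3)` is `(a/d + a/(dq), b/d + ar/(dq))` mod 1, which lies
within `1/d` of the grid point because `ar < q`. Letting `d` grow, these grid points approximate
every point of the square.
-/

/-- `t(q) = ⌊q^{1/3}⌋`. -/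
noncomputable def tq (q : ℕ) : ℕ := ⌊(q : ℝ) ^ ((1 : ℝ) / 3)⌋₊

/-- `r(q) = ⌊q^{1/2}⌋`. -/
noncomputable def rq (q : ℕ) : ℕ := ⌊(q : ℝ) ^ ((1 : ℝ) / 2)⌋₊

/-- `p(q)` is the inverse of `t(q)` modulo `q` (taken in `{1, …, q-1}`) when `t(q)` and `q`
are coprime, and `0` otherwise. -/
noncomputable def pq (q : ℕ) : ℕ :=
  if Nat.Coprime (tq q) q then (((tq q : ZMod q))⁻¹).val else 0

/-- The set of frequencies `FS(2,3) = ⋃_q FS_q(2,3)`, where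
`FS_q(2,3) = {(s p(q)/q mod 1, s p(q) r(q)/q mod 1) : 1 ≤ s ≤ 2 t(q)}`. -/
noncomputable def FS23 : Set (ℝ × ℝ) :=
  {v | ∃ q : ℕ, 1 ≤ q ∧ ∃ s : ℕ, 1 ≤ s ∧ s ≤ 2 * tq q ∧
    v = (Int.fract (((s * pq q : ℕ) : ℝ) / (q : ℝ)),
         Int.fract (((s * pq q * rq q : ℕ) : ℝ) / (q : ℝ)))}

theorem Nat.floor_rpow_one_div_eq {q t k : ℕ} (hk : k ≠ 0) (hle : t ^ k ≤ q)
    (hlt : q < (t + 1) ^ k) :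
    ⌊(q : ℝ) ^ ((1 : ℝ) / k)⌋₊ = t := by
  have hroot : 0 ≤ (q : ℝ) ^ ((1 : ℝ) / k) := by positivity
  have hpow : ((q : ℝ) ^ ((1 : ℝ) / k)) ^ k = q := by
    rw [one_div, Real.rpow_inv_natCast_pow q.cast_nonneg hk]
  rw [Nat.floor_eq_iff hroot]
  constructor
  · rw [← pow_le_pow_iff_left₀ t.cast_nonneg hroot hk, hpow]
    exact_mod_cast hle
  · rw [← pow_lt_pow_iff_left₀ hroot (by positivity) hk, hpow]
    exact_mod_cast hlt

theorem tq_eq {q t : ℕ} (hle : t ^ 3 ≤ q) (hlt : q < (t + 1) ^ 3) : tq q = t := by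
  simpa [tq] using Nat.floor_rpow_one_div_eq (k := 3) three_ne_zero hle hlt

theorem rq_eq {q r : ℕ} (hle : r ^ 2 ≤ q) (hlt : q < (r + 1) ^ 2) : rq q = r := by
  simpa [rq] using Nat.floor_rpow_one_div_eq (k := 2) two_ne_zero hle hlt

theorem pq_eq {q M : ℕ} (hinv : tq q * M = q + 1) (hM : M < q) : pq q = M := by
  have hcop : Nat.Coprime (tq q) q :=
    (Nat.coprime_self_add_left.mpr (Nat.coprime_one_left q)).coprime_dvd_left (Dvd.intro M hinv)
  rw [pq, if_pos hcop, ZMod.inv_eq_of_mul_eq_one _ _ (M : ZMod q), ZMod.val_cast_of_lt hM]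
  exact_mod_cast (congrArg (Nat.cast : ℕ → ZMod q) hinv).trans (by simp)

theorem dist_fract_mul_div_lt {N d M q : ℕ} (hdM : d ^ 2 * M = q + 1) (hN : N < q) :
    dist (Int.fract (((N * d * M : ℕ) : ℝ) / q)) ((N % d : ℕ) / d) < 1 / d := by
  have hd : (0 : ℝ) < d := by
    have : 0 < d := Nat.pos_of_ne_zero (by rintro rfl; simp at hdM)
    exact_mod_cast this
  have hq : (0 : ℝ) < q := by exact_mod_cast (Nat.zero_le N).trans_lt hN
  have hdMR : (d : ℝ) ^ 2 * M = q + 1 := by exact_mod_cast hdM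
  have hdiv : (N : ℝ) = d * (N / d : ℕ) + (N % d : ℕ) := by
    exact_mod_cast (Nat.div_add_mod N d).symm
  have hmod : ((N % d : ℕ) : ℝ) + 1 ≤ d := by
    exact_mod_cast Nat.mod_lt N (by exact_mod_cast hd)
  have hsmall : (N : ℝ) / (d * q) < 1 / d := by
    rw [div_lt_div_iff₀ (by positivity) hd]
    nlinarith [show (N : ℝ) < q by exact_mod_cast hN]
  have hfract : Int.fract (((N * d * M : ℕ) : ℝ) / q) = (N % d : ℕ) / d + N / (d * q) := by
    rw [Int.fract_eq_iff]
    refine ⟨by positivity, ?_, (N / d : ℕ), ?_⟩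
    · calc ((N % d : ℕ) : ℝ) / d + N / (d * q) < (N % d : ℕ) / d + 1 / d := by gcongr
        _ = ((N % d : ℕ) + 1) / d := by ring
        _ ≤ 1 := (div_le_one hd).mpr hmod
    · rw [Int.cast_natCast, Nat.cast_mul, Nat.cast_mul]
      field_simp
      linear_combination (N : ℝ) * hdMR + (q : ℝ) * hdiv
  rw [hfract, Real.dist_eq, add_sub_cancel_left, abs_of_nonneg (by positivity)]
  exact hsmall

theorem Nat.exists_mul_modEq_of_coprime {a d : ℕ} (hd : 0 < d) (hcop : a.Coprime d) (m b : ℕ) :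
    ∃ r, m ≤ r ∧ r < m + d ∧ a * r ≡ b [MOD d] := by
  have : NeZero d := ⟨hd.ne'⟩
  set c := ((a : ZMod d)⁻¹ * (b - a * m)).val
  refine ⟨m + c, Nat.le_add_right m c, Nat.add_lt_add_left (ZMod.val_lt _) m, ?_⟩
  rw [← ZMod.natCast_eq_natCast_iff]
  push_cast
  rw [ZMod.natCast_zmod_val, mul_add, ← mul_assoc, ZMod.coe_mul_inv_eq_one a hcop]
  ring

theorem exists_sq_mul_eq_succ {d : ℕ} (hd : 0 < d) (r : ℕ) :
    ∃ q M : ℕ, d ^ 2 * M = q + 1 ∧ r ^ 2 ≤ q ∧ q < r ^ 2 + d ^ 2 := by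
  have hdiv := Nat.div_add_mod (r ^ 2) (d ^ 2)
  have hmod := Nat.mod_lt (r ^ 2) (by positivity : 0 < d ^ 2)
  refine ⟨d ^ 2 * (r ^ 2 / d ^ 2) + d ^ 2 - 1, r ^ 2 / d ^ 2 + 1, ?_⟩
  rw [mul_add, mul_one]
  generalize d ^ 2 * (r ^ 2 / d ^ 2) = P at *
  generalize r ^ 2 % d ^ 2 = R at *
  omega

section Modulus

variable {d r q : ℕ}

theorem tq_eq_sq (hr : d ^ 3 ≤ r) (hr' : r < d ^ 3 + d) (hq : r ^ 2 ≤ q)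
    (hq' : q < r ^ 2 + d ^ 2) : tq q = d ^ 2 := by
  apply tq_eq
  · calc (d ^ 2) ^ 3 = (d ^ 3) ^ 2 := by ring
      _ ≤ r ^ 2 := Nat.pow_le_pow_left hr 2
      _ ≤ q := hq
  · calc q < r ^ 2 + d ^ 2 := hq'
      _ ≤ (d ^ 3 + d) ^ 2 + d ^ 2 := by gcongr
      _ ≤ (d ^ 2 + 1) ^ 3 := by ring_nf; omega

theorem rq_eq_of_cube_le (hd : 0 < d) (hr : d ^ 3 ≤ r) (hq : r ^ 2 ≤ q)
    (hq' : q < r ^ 2 + d ^ 2) : rq q = r := by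
  apply rq_eq hq
  calc q < r ^ 2 + d ^ 2 := hq'
    _ ≤ r ^ 2 + d ^ 3 := by gcongr; norm_num
    _ ≤ (r + 1) ^ 2 := by ring_nf; omega

end Modulus

theorem exists_mem_FS23_dist_lt {d a b : ℕ} (hd : d.Prime) (ha : 0 < a) (had : a < d)
    (hbd : b < d) :
    ∃ v ∈ FS23, dist v ((a : ℝ) / d, (b : ℝ) / d) < 1 / d := by
  have hcop : a.Coprime d := (Nat.coprime_of_lt_prime ha.ne' had hd).symm
  obtain ⟨r, hr, hr', har⟩ := Nat.exists_mul_modEq_of_coprime hd.pos hcop (d ^ 3) b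
  obtain ⟨q, M, hqM, hq, hq'⟩ := exists_sq_mul_eq_succ hd.pos r
  have hdr : d ≤ r := (Nat.le_self_pow three_ne_zero d).trans hr
  have har_lt : a * r < q := by nlinarith
  have hpq : pq q = M := by
    refine pq_eq (by rw [tq_eq_sq hr hr' hq hq', hqM]) ?_
    have hd4 : 4 ≤ d ^ 2 := by nlinarith [hd.two_le]
    have := hqM ▸ Nat.mul_le_mul_right M hd4
    omega
  refine ⟨_, ⟨q, by omega, a * d, Nat.mul_pos ha hd.pos, ?_, rfl⟩, ?_⟩
  · rw [tq_eq_sq hr hr' hq hq']; nlinarith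
  rw [hpq, rq_eq_of_cube_le hd.pos hr hq hq', Prod.dist_eq]
  refine max_lt ?_ ?_
  · have ha_lt : a < q := (Nat.le_mul_of_pos_right a (by omega)).trans_lt har_lt
    simpa [Nat.mod_eq_of_lt had] using dist_fract_mul_div_lt hqM ha_lt
  · have hb : a * r % d = b := Nat.mod_eq_of_lt hbd ▸ har
    simpa [show a * r * d * M = a * d * M * r by ring, hb] using dist_fract_mul_div_lt hqM har_lt

theorem exists_nat_dist_div_le {x : ℝ} (hx : x ∈ Set.Icc 0 1) {d : ℕ} (hd : 2 ≤ d) :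
    ∃ a : ℕ, 0 < a ∧ a < d ∧ dist x (a / d) ≤ 2 / d := by
  have hd' : (2 : ℝ) ≤ d := by exact_mod_cast hd
  have hprod : 0 ≤ x * (d - 2) := mul_nonneg hx.1 (by linarith)
  have hfloor := Nat.floor_le hprod
  have hfloor' := Nat.lt_floor_add_one (x * (d - 2))
  have hxd : x * (d - 2) ≤ d - 2 := mul_le_of_le_one_left (by linarith) hx.2
  set f := ⌊x * (d - 2)⌋₊
  refine ⟨f + 1, Nat.succ_pos f, ?_, ?_⟩
  · have : (f : ℝ) + 1 < d := by linarith
    exact_mod_cast this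
  · have hd0 : (0 : ℝ) < d := by linarith
    rw [Real.dist_eq,
      show x - ((f + 1 : ℕ) : ℝ) / d = (x * d - (f + 1 : ℕ)) / d by field_simp,
      abs_div, abs_of_pos hd0, div_le_div_iff_of_pos_right hd0, abs_le]
    push_cast
    constructor <;> nlinarith [hx.1, hx.2]

/-- The set of frequencies `FS(2,3)` is dense in `[0,1]²`. -/
theorem FS23_dense : Set.Icc (0 : ℝ) 1 ×ˢ Set.Icc (0 : ℝ) 1 ⊆ closure FS23 := by
  rintro ⟨x, y⟩ ⟨hx, hy⟩
  refine Metric.mem_closure_iff.mpr fun ε hε => ?_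
  obtain ⟨n, hn⟩ := exists_nat_gt (3 / ε)
  obtain ⟨d, hnd, hd⟩ := Nat.exists_infinite_primes n
  have hd0 : (0 : ℝ) < d := by exact_mod_cast hd.pos
  obtain ⟨a, ha, had, hxa⟩ := exists_nat_dist_div_le hx hd.two_le
  obtain ⟨b, -, hbd, hyb⟩ := exists_nat_dist_div_le hy hd.two_le
  obtain ⟨v, hv, hvab⟩ := exists_mem_FS23_dist_lt hd ha had hbd
  refine ⟨v, hv, ?_⟩
  calc dist (x, y) v
      ≤ dist (x, y) ((a : ℝ) / d, (b : ℝ) / d) + dist v ((a : ℝ) / d, (b : ℝ) / d) :=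
        dist_triangle_right _ _ _
    _ < 2 / d + 1 / d := add_lt_add_of_le_of_lt (max_le hxa hyb) hvab
    _ = 3 / d := by ring
    _ < ε := (div_lt_comm₀ hd0 hε).mpr (hn.trans_le (by exact_mod_cast hnd))
end

section
/- There exist real numbers α and β with 1, α, β linearly independent over ℚ and a continuous function ρ : 𝕋¹ → ℂ such that the cylindrical vortex F : 𝕋¹ × ℂ → 𝕋¹ × ℂ, F(x,z) = (x + α, e^{2πiβ} z + ρ(x)), is topologically transitive; in fact the full orbit {F^n(0,0) : n ∈ ℤ} of the point (0,0) is dense in 𝕋¹ × ℂ. -/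
/-!
With `c = e^{2πiβ}`, the `n`-th iterate of `(0, 0)` is `(nα, Sₙρ)` where
`Sₙρ = ∑_{k<n} c^{n-1-k} ρ(kα)` is linear and continuous in `ρ ∈ C(𝕋¹, ℂ)`. By Baire's theorem
it suffices that for every nonempty open `U` the `ρ` whose forward orbit of `(0, 0)` meets `U` are
dense. For a trigonometric polynomial `ρ` the sums `Sₙρ` stay bounded: on the mode `e^{2πimx}`
they are geometric sums with ratio `e^{2πimα}/c ≠ 1`, which is where `β ∉ ℤα + ℤ` enters. Given
such `ρ` and a target `(x, z)`, take `n` large with `nα` near `x`; spreading the defect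
`z - Sₙρ` evenly over the `n` distinct points `kα`, `k < n`, gives a perturbation of sup norm
`|z - Sₙρ| / n` after which the orbit hits `(nα, z)`.
-/

open Function Finset Real

theorem Transcendental.linearIndependent_pow {R A : Type*} [CommRing R] [Ring A] [Algebra R A]
    {x : A} (hx : Transcendental R x) : LinearIndependent R (x ^ · : ℕ → A) := by
  have := (Polynomial.basisMonomials R).linearIndependent.map' (Polynomial.aeval x).toLinearMap
    (LinearMap.ker_eq_bot.mpr (transcendental_iff_injective.mp hx))
  simpa [Polynomial.coe_basisMonomials, Function.comp_def] using this

theorem exists_linearIndependent_one_pair : ∃ α β : ℝ, LinearIndependent ℚ ![1, α, β] := by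
  have hξ : Transcendental ℚ (liouvilleNumber 2) := fun h =>
    transcendental_liouvilleNumber le_rfl ((IsFractionRing.isAlgebraic_iff ℤ ℚ ℝ).mpr h)
  refine ⟨liouvilleNumber 2, liouvilleNumber 2 ^ 2, ?_⟩
  have h : ![1, liouvilleNumber 2, liouvilleNumber 2 ^ 2] =
      (liouvilleNumber 2 ^ ·) ∘ ![0, 1, 2] := by
    ext i; fin_cases i <;> simp
  rw [h]
  exact hξ.linearIndependent_pow.comp _ (by decide)

section LinearIndependent

variable {p α β : ℝ}

theorem AddCircle.not_isOfFinAddOrder_coe_of_linearIndependent [Fact (0 < p)]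
    (h : LinearIndependent ℚ ![p, α, β]) : ¬IsOfFinAddOrder (α : AddCircle p) := by
  rw [AddCircle.not_isOfFinAddOrder_iff_forall_rat_ne_div]
  intro q hq
  have hq' : (q : ℝ) * p = α := by rw [hq, div_mul_cancel₀ _ (Fact.out : 0 < p).ne']
  have := Fintype.linearIndependent_iff.mp h ![q, -1, 0]
    (by simp [Fin.sum_univ_three, Rat.smul_def, hq']) 1
  simp at this

theorem AddCircle.zsmul_coe_ne_coe_of_linearIndependent (h : LinearIndependent ℚ ![p, α, β])
    (m : ℤ) : m • (α : AddCircle p) ≠ β := by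
  rw [← AddCircle.coe_zsmul, ne_eq, ← sub_eq_zero, ← AddCircle.coe_sub, AddCircle.coe_eq_zero_iff]
  rintro ⟨l, hl⟩
  rw [zsmul_eq_mul, zsmul_eq_mul] at hl
  have := Fintype.linearIndependent_iff.mp h ![-l, m, -1]
    (by simp [Fin.sum_univ_three, Rat.smul_def]; linarith) 2
  simp at this

end LinearIndependent

section Cocycle

variable {G K : Type*}

def cocycleSum [AddMonoid G] [Semiring K] (a : G) (c : K) (ρ : G → K) (n : ℕ) : K :=
  ∑ k ∈ range n, c ^ (n - 1 - k) * ρ (k • a)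

section Semiring

variable [AddMonoid G] [Semiring K] (a : G) (c : K)

@[simp]
theorem cocycleSum_zero (ρ : G → K) : cocycleSum a c ρ 0 = 0 := rfl

theorem cocycleSum_succ (ρ : G → K) (n : ℕ) :
    cocycleSum a c ρ (n + 1) = c * cocycleSum a c ρ n + ρ (n • a) := by
  rw [cocycleSum, cocycleSum, sum_range_succ, Nat.add_sub_cancel, Nat.sub_self, pow_zero, one_mul,
    mul_sum]
  congr 1
  refine sum_congr rfl fun k hk => ?_
  rw [← mul_assoc, ← pow_succ']
  congr 2
  have := mem_range.mp hk
  omega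

theorem cocycleSum_add (ρ σ : G → K) (n : ℕ) :
    cocycleSum a c (ρ + σ) n = cocycleSum a c ρ n + cocycleSum a c σ n := by
  simp only [cocycleSum, Pi.add_apply, mul_add, sum_add_distrib]

theorem continuous_cocycleSum [TopologicalSpace G] [TopologicalSpace K] [IsTopologicalSemiring K]
    (n : ℕ) : Continuous fun ρ : C(G, K) => cocycleSum a c ρ n :=
  continuous_finsetSum _ fun _ _ => continuous_const.mul (continuous_eval_const _)

end Semiring

theorem cocycleSum_smul [AddMonoid G] [CommSemiring K] (a : G) (c r : K) (ρ : G → K) (n : ℕ) :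
    cocycleSum a c (r • ρ) n = r * cocycleSum a c ρ n := by
  simp only [cocycleSum, Pi.smul_apply, smul_eq_mul, mul_sum, mul_left_comm]

theorem norm_cocycleSum_le_of_apply_nsmul_eq_pow [AddMonoid G] [NormedField K] {a : G} {c μ : K}
    {ρ : G → K} (hc : ‖c‖ = 1) (hμ : ‖μ‖ = 1) (hμc : μ ≠ c) (hρ : ∀ k : ℕ, ρ (k • a) = μ ^ k)
    (n : ℕ) : ‖cocycleSum a c ρ n‖ ≤ 2 / ‖μ - c‖ := by
  have hsum : cocycleSum a c ρ n = (μ ^ n - c ^ n) / (μ - c) := by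
    rw [eq_div_iff (sub_ne_zero.mpr hμc), ← geom_sum₂_mul, cocycleSum]
    simp only [hρ, mul_comm]
  rw [hsum, norm_div]
  gcongr
  calc ‖μ ^ n - c ^ n‖ ≤ ‖μ ^ n‖ + ‖c ^ n‖ := norm_sub_le _ _
    _ = 2 := by rw [norm_pow, norm_pow, hμ, hc]; norm_num

def boundedCocycles [AddMonoid G] [NormedField K] (a : G) (c : K) : Submodule K (G → K) where
  carrier := {ρ | ∃ C, ∀ n, ‖cocycleSum a c ρ n‖ ≤ C}
  zero_mem' := ⟨0, fun n => by simp [cocycleSum]⟩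
  add_mem' := by
    rintro ρ σ ⟨C, hC⟩ ⟨D, hD⟩
    exact ⟨C + D, fun n =>
      (cocycleSum_add a c ρ σ n ▸ norm_add_le _ _).trans (add_le_add (hC n) (hD n))⟩
  smul_mem' := by
    rintro r ρ ⟨C, hC⟩
    exact ⟨‖r‖ * C, fun n => by
      rw [cocycleSum_smul, norm_mul]
      exact mul_le_mul_of_nonneg_left (hC n) (norm_nonneg r)⟩

def vortex [AddGroup G] [DivisionRing K] (a : G) (c : K) (hc : c ≠ 0) (ρ : G → K) :
    Equiv.Perm (G × K) :=
  Equiv.prodShear (Equiv.addRight a) fun x => (Equiv.mulLeft₀ c hc).trans (Equiv.addRight (ρ x))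

@[simp]
theorem vortex_apply [AddGroup G] [DivisionRing K] (a : G) (c : K) (hc : c ≠ 0) (ρ : G → K)
    (p : G × K) : vortex a c hc ρ p = (p.1 + a, c * p.2 + ρ p.1) :=
  rfl

theorem vortex_pow_apply_zero [AddGroup G] [DivisionRing K] (a : G) (c : K) (hc : c ≠ 0)
    (ρ : G → K) (n : ℕ) : (vortex a c hc ρ ^ n) (0, 0) = (n • a, cocycleSum a c ρ n) := by
  induction n with
  | zero => simp
  | succ n ih =>
    rw [pow_succ', Equiv.Perm.mul_apply, ih, vortex_apply, cocycleSum_succ, succ_nsmul]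

end Cocycle

theorem exists_continuousMap_norm_le_and_apply_eq {X E ι : Type*} [TopologicalSpace X]
    [NormalSpace X] [T2Space X] [NormedAddCommGroup E] [NormedSpace ℝ E] [FiniteDimensional ℝ E]
    [TopologicalSpace ι] [DiscreteTopology ι] [Finite ι] {p : ι → X} (hp : Injective p)
    {ε : ℝ} (hε : 0 < ε) {v : ι → E} (hv : ∀ i, ‖v i‖ ≤ ε) :
    ∃ g : C(X, E), (∀ x, ‖g x‖ ≤ ε) ∧ ∀ i, g (p i) = v i := by
  have := Metric.instTietzeExtensionClosedBall ℝ (0 : E) hε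
  obtain ⟨g, hgε, hgp⟩ := ContinuousMap.exists_extension_forall_mem
    (continuous_of_discreteTopology.isClosedEmbedding hp) ⟨v, continuous_of_discreteTopology⟩
    (t := Metric.closedBall 0 ε) (by simpa using hv)
  exact ⟨g, by simpa using hgε, fun i => DFunLike.congr_fun hgp i⟩

theorem DenseRange.exists_le_nsmul_mem {G : Type*} [AddGroup G] [TopologicalSpace G]
    [ContinuousAdd G] {a : G} (h : DenseRange (· • a : ℕ → G)) {U : Set G} (hU : IsOpen U)
    (hne : U.Nonempty) (N : ℕ) : ∃ n, N ≤ n ∧ n • a ∈ U := by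
  have hshift : DenseRange fun n : ℕ => (N + n) • a := by
    simpa [Function.comp_def, add_nsmul] using
      (add_left_surjective (N • a)).denseRange.comp h (continuous_const_add _)
  obtain ⟨n, hn⟩ := hshift.exists_mem_open hU hne
  exact ⟨N + n, N.le_add_right n, hn⟩

theorem exists_denseRange_of_dense_setOf_exists_mem {P Y ι : Type*} [TopologicalSpace P]
    [BaireSpace P] [Nonempty P] [TopologicalSpace Y] [SecondCountableTopology Y]
    {f : P → ι → Y} (hf : ∀ i, Continuous fun p => f p i)
    (hdense : ∀ U : Set Y, IsOpen U → U.Nonempty → Dense {p | ∃ i, f p i ∈ U}) :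
    ∃ p, DenseRange (f p) := by
  obtain ⟨b, hbc, hbne, hb⟩ := TopologicalSpace.exists_countable_basis Y
  have hvisit : ∀ U ∈ b, ∀ᶠ p in residual P, ∃ i, f p i ∈ U := fun U hU => by
    refine residual_of_dense_open ?_
      (hdense U (hb.isOpen hU) (Set.nonempty_iff_ne_empty.mpr (ne_of_mem_of_not_mem hU hbne)))
    simp only [Set.ofPred_exists]
    exact isOpen_iUnion fun i => (hb.isOpen hU).preimage (hf i)
  obtain ⟨t, -, ht, hpt⟩ := eventually_residual.mp ((eventually_countable_ball hbc).mpr hvisit)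
  obtain ⟨p, hp⟩ := ht.nonempty
  refine ⟨p, hb.dense_iff.mpr fun U hU _ => ?_⟩
  obtain ⟨i, hi⟩ := hpt p hp U hU
  exact ⟨_, hi, i, rfl⟩

theorem exists_cocycleSum_eq_of_norm_le {X 𝕜 : Type*} [AddMonoid X] [TopologicalSpace X]
    [NormalSpace X] [T2Space X] [RCLike 𝕜] {a : X} (ha : Injective (· • a : ℕ → X)) {c : 𝕜}
    (hc : ‖c‖ = 1) {ε : ℝ} (hε : 0 < ε) {n : ℕ} {d : 𝕜} (hd : ‖d‖ ≤ n * ε) :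
    ∃ g : C(X, 𝕜), (∀ x, ‖g x‖ ≤ ε) ∧ cocycleSum a c g n = d := by
  rcases n.eq_zero_or_pos with rfl | hn
  · exact ⟨0, by simpa using hε.le, (norm_le_zero_iff.mp (by simpa using hd)).symm⟩
  have hc0 : c ≠ 0 := norm_ne_zero_iff.mp (by simp [hc])
  obtain ⟨g, hgε, hg⟩ := exists_continuousMap_norm_le_and_apply_eq
    (p := fun k : Fin n => (k : ℕ) • a) (ha.comp Fin.val_injective) hε
    (v := fun k => d / (n * c ^ (n - 1 - k)))
    (fun k => by
      rw [norm_div, norm_mul, norm_pow, hc, one_pow, mul_one, RCLike.norm_natCast,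
        div_le_iff₀ (by positivity)]
      linarith)
  refine ⟨g, hgε, ?_⟩
  calc cocycleSum a c g n = ∑ _k : Fin n, d / n := by
        rw [cocycleSum, ← Fin.sum_univ_eq_sum_range]
        refine sum_congr rfl fun k _ => ?_
        rw [hg k]
        field_simp
    _ = d := by
        rw [sum_const, card_univ, Fintype.card_fin, nsmul_eq_mul,
          mul_div_cancel₀ _ (Nat.cast_ne_zero.mpr hn.ne')]

namespace AddCircle

variable {T : ℝ}

theorem fourier_apply_nsmul (m : ℤ) (k : ℕ) (x : AddCircle T) :
    fourier m (k • x) = fourier m x ^ k := by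
  rw [fourier_apply, fourier_apply, smul_comm, toCircle_nsmul, Circle.coe_pow]

variable [Fact (0 < T)] {a b : AddCircle T}

theorem span_fourier_le_boundedCocycles (hb : ∀ m : ℤ, m • a ≠ b) :
    Submodule.span ℂ (Set.range fourier) ≤
      (boundedCocycles a (toCircle b : ℂ)).comap (ContinuousMap.coeFnLinearMap ℂ) := by
  rw [Submodule.span_le, Set.range_subset_iff]
  intro m
  have hne : fourier m a ≠ toCircle b := fun h =>
    hb m (injective_toCircle (Fact.out : 0 < T).ne' (Circle.coe_injective h))
  exact ⟨_, norm_cocycleSum_le_of_apply_nsmul_eq_pow (Circle.norm_coe _) (Circle.norm_coe _) hne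
    (fun k => fourier_apply_nsmul m k a)⟩

theorem dense_setOf_exists_cocycleSum_mem (ha : ¬IsOfFinAddOrder a) (hb : ∀ m : ℤ, m • a ≠ b)
    {U : Set (AddCircle T × ℂ)} (hU : IsOpen U) (hne : U.Nonempty) :
    Dense {ρ : C(AddCircle T, ℂ) | ∃ n : ℕ, (n • a, cocycleSum a (toCircle b : ℂ) ρ n) ∈ U} := by
  rw [Metric.dense_iff]
  intro ρ₀ ε hε
  obtain ⟨⟨x, z⟩, hxz⟩ := hne
  obtain ⟨V, W, hV, -, hxV, hzW, hVW⟩ := isOpen_prod_iff.mp hU x z hxz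
  have htrig :=
    Submodule.dense_iff_topologicalClosure_eq_top.mpr (span_fourier_closure_eq_top (T := T))
  obtain ⟨ρ₁, hρ₁ε, hρ₁⟩ := Metric.dense_iff.mp htrig ρ₀ (ε / 2) (half_pos hε)
  obtain ⟨C, hC⟩ := span_fourier_le_boundedCocycles hb hρ₁
  obtain ⟨N, hN⟩ := exists_nat_ge ((‖z‖ + C) / (ε / 2))
  have hdense : DenseRange (· • a : ℕ → AddCircle T) :=
    denseRange_zsmul_iff_nsmul.mp (denseRange_zsmul_iff.mpr (addOrderOf_eq_zero_iff.mpr ha))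
  obtain ⟨n, hNn, hnV⟩ := hdense.exists_le_nsmul_mem hV ⟨x, hxV⟩ N
  have hd : ‖z - cocycleSum a (toCircle b : ℂ) ρ₁ n‖ ≤ n * (ε / 2) := calc
    _ ≤ ‖z‖ + C := (norm_sub_le _ _).trans (add_le_add_right (hC n) _)
    _ ≤ N * (ε / 2) := by rw [← div_le_iff₀ (half_pos hε)]; linarith
    _ ≤ n * (ε / 2) := by gcongr
  obtain ⟨g, hgε, hg⟩ := exists_cocycleSum_eq_of_norm_le
    (injective_nsmul_iff_not_isOfFinAddOrder.mpr ha) (Circle.norm_coe (toCircle b)) (half_pos hε) hd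
  refine ⟨ρ₁ + g, ?_, n, hVW ⟨hnV, ?_⟩⟩
  · have hg' : dist (ρ₁ + g) ρ₁ ≤ ε / 2 := by
      rw [dist_eq_norm, add_sub_cancel_left]
      exact (ContinuousMap.norm_le _ (half_pos hε).le).mpr hgε
    have := dist_triangle (ρ₁ + g) ρ₁ ρ₀
    rw [Metric.mem_ball] at hρ₁ε ⊢
    linarith
  · rw [ContinuousMap.coe_add, cocycleSum_add, hg, add_sub_cancel]
    exact hzW

theorem exists_denseRange_vortex_pow_apply_zero (ha : ¬IsOfFinAddOrder a)
    (hb : ∀ m : ℤ, m • a ≠ b) : ∃ ρ : C(AddCircle T, ℂ),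
      DenseRange fun n : ℕ => (vortex a (toCircle b : ℂ) (Circle.coe_ne_zero _) ρ ^ n) (0, 0) := by
  simp only [vortex_pow_apply_zero]
  exact exists_denseRange_of_dense_setOf_exists_mem
    (fun n => continuous_const.prodMk (continuous_cocycleSum a _ n))
    (fun U hU hne => dense_setOf_exists_cocycleSum_mem ha hb hU hne)

end AddCircle

/-- There exist `α, β` with `1, α, β` rationally independent and a continuous
`ρ : 𝕋¹ → ℂ` such that the cylindrical vortex `F(x,z) = (x + α, e^{2πiβ} z + ρ(x))` on
`𝕋¹ × ℂ` is topologically transitive; in fact, the full orbit of `(0,0)` is dense. -/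
theorem exists_transitive_vortex :
    ∃ (α β : ℝ), LinearIndependent ℚ ![(1 : ℝ), α, β] ∧
      ∃ ρ : AddCircle (1 : ℝ) → ℂ, Continuous ρ ∧
        ∃ F : Equiv.Perm (AddCircle (1 : ℝ) × ℂ),
          (∀ p : AddCircle (1 : ℝ) × ℂ,
            F p = (p.1 + (α : AddCircle (1 : ℝ)),
              Complex.exp (2 * π * Complex.I * β) * p.2 + ρ p.1)) ∧
          Dense {q : AddCircle (1 : ℝ) × ℂ |
            ∃ n : ℤ, (F ^ n) ((0 : AddCircle (1 : ℝ)), (0 : ℂ)) = q} := by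
  have : Fact ((0 : ℝ) < 1) := ⟨one_pos⟩
  obtain ⟨α, β, hαβ⟩ := exists_linearIndependent_one_pair
  obtain ⟨ρ, hρ⟩ := AddCircle.exists_denseRange_vortex_pow_apply_zero
    (AddCircle.not_isOfFinAddOrder_coe_of_linearIndependent hαβ)
    (AddCircle.zsmul_coe_ne_coe_of_linearIndependent hαβ)
  have hc : (AddCircle.toCircle (β : AddCircle (1 : ℝ)) : ℂ) =
      Complex.exp (2 * π * Complex.I * β) := by
    rw [AddCircle.toCircle_apply_mk, Circle.coe_exp]
    push_cast
    ring_nf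
  refine ⟨α, β, hαβ, ρ, ρ.continuous,
    vortex (α : AddCircle (1 : ℝ)) _
      (Circle.coe_ne_zero (AddCircle.toCircle (β : AddCircle (1 : ℝ)))) ρ,
    fun p => ?_, ?_⟩
  · rw [vortex_apply, hc]
  · refine hρ.mono ?_
    rintro _ ⟨n, rfl⟩
    exact ⟨n, by rw [zpow_natCast]⟩
end

section
/- Let ρ : 𝕋¹ → ℂ be a C^∞ function and let (α, β) satisfy a type-1 Diophantine condition, i.e., there exist C > 0 and τ ≥ 0 with |e^{2πi(nα−β)} − 1| ≥ C / max(|n|,1)^{1+τ} for every integer n. Then the cylindrical vortex F(x,z) = (x + α, e^{2πiβ} z + ρ(x)) on 𝕋¹ × ℂ is reducible: there exists a continuous (indeed C^∞) function φ : 𝕋¹ → ℂ satisfying φ(x + α) = e^{2πiβ} φ(x) + ρ(x) for all x ∈ 𝕋¹. -/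
/-!
Expand in Fourier series. Since `fourier n (x + α) = fourier n α * fourier n x`, the equation
`φ (x + α) = λ φ x + ρ x` with `λ = exp (2πiβ)` reads `φ̂ n * (fourier n α - λ) = ρ̂ n` on
coefficients. Integrating by parts `k` times shows that the coefficients of a smooth `ρ` decay
faster than every power of `|n|`, and the Diophantine condition bounds the small divisors
`‖fourier n α - λ‖ = ‖exp (2πi(nα - β)) - 1‖` below by a fixed power of `1 / |n|`. So
`φ̂ n := ρ̂ n / (fourier n α - λ)` still decays faster than every power, and the resulting Fourier
series may be differentiated termwise any number of times.
-/

open Real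
open scoped ContDiff

def IsRapidlyDecreasing {E : Type*} [Norm E] (a : ℤ → E) : Prop :=
  ∀ k : ℕ, ∃ B : ℝ, ∀ n : ℤ, n ≠ 0 → ‖a n‖ * |(n : ℝ)| ^ k ≤ B

namespace IsRapidlyDecreasing

lemma summable_norm_mul_pow {E : Type*} [SeminormedAddGroup E] {a : ℤ → E}
    (ha : IsRapidlyDecreasing a) (k : ℕ) : Summable fun n : ℤ => ‖a n‖ * |(n : ℝ)| ^ k := by
  obtain ⟨B, hB⟩ := ha (k + 2)
  refine .of_norm_bounded_eventually
    ((Real.summable_one_div_int_pow.mpr one_lt_two).mul_left B) ?_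
  filter_upwards [(Set.finite_singleton (0 : ℤ)).compl_mem_cofinite] with n hn
  have hn0 : 0 < |(n : ℝ)| := by simpa using hn
  rw [Real.norm_of_nonneg (by positivity), ← sq_abs, mul_one_div,
    le_div_iff₀ (by positivity), mul_assoc, ← pow_add]
  exact hB n (by simpa using hn)

lemma summable {E : Type*} [NormedAddCommGroup E] [CompleteSpace E] {a : ℤ → E}
    (ha : IsRapidlyDecreasing a) : Summable a :=
  .of_norm <| by simpa using ha.summable_norm_mul_pow 0

lemma div {𝕜 : Type*} [NormedDivisionRing 𝕜] {a d : ℤ → 𝕜} (ha : IsRapidlyDecreasing a)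
    {C : ℝ} (hC : 0 < C) (N : ℕ) (hd : ∀ n : ℤ, n ≠ 0 → C ≤ ‖d n‖ * |(n : ℝ)| ^ N) :
    IsRapidlyDecreasing fun n => a n / d n := by
  intro k
  obtain ⟨B, hB⟩ := ha (k + N)
  refine ⟨B / C, fun n hn => ?_⟩
  have hdn : 0 < ‖d n‖ := pos_of_mul_pos_left (hC.trans_le (hd n hn)) (by positivity)
  rw [norm_div, le_div_iff₀ hC]
  calc ‖a n‖ / ‖d n‖ * |(n : ℝ)| ^ k * C
      ≤ ‖a n‖ / ‖d n‖ * |(n : ℝ)| ^ k * (‖d n‖ * |(n : ℝ)| ^ N) := by gcongr; exact hd n hn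
    _ = ‖a n‖ * |(n : ℝ)| ^ (k + N) := by field_simp; ring
    _ ≤ B := hB n hn

end IsRapidlyDecreasing

lemma Function.Periodic.iteratedDeriv {𝕜 F : Type*} [NontriviallyNormedField 𝕜]
    [NormedAddCommGroup F] [NormedSpace 𝕜 F] {f : 𝕜 → F} {T : 𝕜} (hf : Function.Periodic f T)
    (k : ℕ) : Function.Periodic (iteratedDeriv k f) T := fun t => by
  rw [← congrFun (iteratedDeriv_comp_add_const (n := k) (f := f) (s := T)) t, funext hf]

lemma AddCircle.continuous_of_continuous_comp_coe {T : ℝ} {X : Type*} [TopologicalSpace X]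
    {f : AddCircle T → X} (hf : Continuous fun t : ℝ => f t) : Continuous f :=
  (QuotientAddGroup.isQuotientMap_mk _).continuous_iff.mpr hf

lemma fourier_apply_add {T : ℝ} (n : ℤ) (x y : AddCircle T) :
    fourier n (x + y) = fourier n x * fourier n y := by
  simp only [fourier_apply, smul_add, AddCircle.toCircle_add, Circle.coe_mul]

open Complex in
lemma iteratedDeriv_const_mul_fourier {T : ℝ} (c : ℂ) (n : ℤ) (k : ℕ) :
    iteratedDeriv k (fun t : ℝ => c * fourier n (t : AddCircle T)) =
      fun t : ℝ => c * (2 * π * I * n / T) ^ k * fourier n (t : AddCircle T) := by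
  induction k with
  | zero => simp
  | succ k ih =>
    ext t
    rw [iteratedDeriv_succ, ih, ((hasDerivAt_fourier T n t).const_mul _).deriv]
    ring

lemma contDiff_fourier_coe {T : ℝ} (n : ℤ) :
    ContDiff ℝ ∞ fun t : ℝ => (fourier n (t : AddCircle T) : ℂ) := by
  simp_rw [fourier_coe_apply]
  exact ((contDiff_const.mul Complex.ofRealCLM.contDiff).div_const _).cexp

lemma fourierCoeff_eq_fourierCoeffOn {T : ℝ} [hT : Fact (0 < T)] {E : Type*}
    [NormedAddCommGroup E] [NormedSpace ℂ E] (f : AddCircle T → E)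
    (n : ℤ) : fourierCoeff f n = fourierCoeffOn hT.out (fun t : ℝ => f t) n := by
  rw [fourierCoeff_eq_intervalIntegral f n 0, fourierCoeffOn_eq_integral]
  simp

lemma norm_fourierCoeff_le {T : ℝ} [Fact (0 < T)] {E : Type*} [NormedAddCommGroup E]
    [NormedSpace ℂ E] {f : AddCircle T → E} {M : ℝ} (hf : ∀ x, ‖f x‖ ≤ M) (n : ℤ) :
    ‖fourierCoeff f n‖ ≤ M :=
  calc ‖fourierCoeff f n‖ ≤ ∫ _, M ∂AddCircle.haarAddCircle :=
        MeasureTheory.norm_integral_le_of_norm_le (MeasureTheory.integrable_const M)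
          (.of_forall fun x => by
            rw [norm_smul, fourier_apply, Circle.norm_coe, one_mul]
            exact hf x)
    _ = M := by simp

lemma norm_fourierCoeffOn_le {a b : ℝ} (hab : a < b) {E : Type*} [NormedAddCommGroup E]
    [NormedSpace ℂ E] {f : ℝ → E} {M : ℝ} (hf : ∀ x ∈ Set.Ioc a b, ‖f x‖ ≤ M) (n : ℤ) :
    ‖fourierCoeffOn hab f n‖ ≤ M := by
  have := Fact.mk (sub_pos.mpr hab)
  refine norm_fourierCoeff_le (fun x => hf _ ?_) n
  simpa using (AddCircle.equivIoc (b - a) a x).2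

open Complex in
lemma fourierCoeffOn_eq_mul_fourierCoeffOn_deriv {T : ℝ} (hT : 0 < T) {f : ℝ → ℂ}
    (hf : ContDiff ℝ 1 f) (hper : Function.Periodic f T) {n : ℤ} (hn : n ≠ 0) :
    fourierCoeffOn hT f n = T / (2 * π * I * n) * fourierCoeffOn hT (deriv f) n := by
  rw [fourierCoeffOn_of_hasDerivAt hT hn (fun x _ => (hf.differentiable one_ne_zero x).hasDerivAt)
    ((hf.continuous_deriv le_rfl).intervalIntegrable _ _), hper.eq, sub_self]
  have : (π : ℂ) ≠ 0 := ofReal_ne_zero.mpr pi_ne_zero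
  field_simp
  simp

open Complex in
lemma fourierCoeffOn_eq_pow_mul_fourierCoeffOn_iteratedDeriv {T : ℝ} (hT : 0 < T) {f : ℝ → ℂ}
    (hf : ContDiff ℝ ∞ f) (hper : Function.Periodic f T) {n : ℤ} (hn : n ≠ 0) (k : ℕ) :
    fourierCoeffOn hT f n =
      (T / (2 * π * I * n)) ^ k * fourierCoeffOn hT (iteratedDeriv k f) n := by
  induction k with
  | zero => simp
  | succ k ih =>
    have hk : ContDiff ℝ ∞ (iteratedDeriv k f) := by
      rw [iteratedDeriv_eq_iterate]; exact hf.iterate_deriv k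
    rw [ih, fourierCoeffOn_eq_mul_fourierCoeffOn_deriv hT (hk.of_le (by simp))
      (hper.iteratedDeriv k) hn, iteratedDeriv_succ]
    ring

open Complex in
lemma norm_ofReal_div_two_pi_I_mul_intCast (T : ℝ) (n : ℤ) :
    ‖(T : ℂ) / (2 * π * I * n)‖ = |T| / (2 * π * |(n : ℝ)|) := by
  simp [abs_of_pos pi_pos]

lemma isRapidlyDecreasing_fourierCoeffOn {T : ℝ} (hT : 0 < T) {f : ℝ → ℂ}
    (hf : ContDiff ℝ ∞ f) (hper : Function.Periodic f T) :
    IsRapidlyDecreasing (fourierCoeffOn hT f) := by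
  intro k
  obtain ⟨M, hM⟩ := (isCompact_Icc (a := 0) (b := T)).exists_bound_of_continuousOn
    (hf.continuous_iteratedDeriv k (mod_cast le_top)).continuousOn
  refine ⟨(T / (2 * π)) ^ k * M, fun n hn => ?_⟩
  rw [fourierCoeffOn_eq_pow_mul_fourierCoeffOn_iteratedDeriv hT hf hper hn k, norm_mul,
    norm_pow, norm_ofReal_div_two_pi_I_mul_intCast, abs_of_pos hT]
  calc (T / (2 * π * |(n : ℝ)|)) ^ k * ‖fourierCoeffOn hT (iteratedDeriv k f) n‖ * |(n : ℝ)| ^ k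
      = (T / (2 * π)) ^ k * ‖fourierCoeffOn hT (iteratedDeriv k f) n‖ := by
        rw [← div_div, div_pow _ (|(n : ℝ)|)]
        field_simp
    _ ≤ (T / (2 * π)) ^ k * M := by
        gcongr
        exact norm_fourierCoeffOn_le hT (fun x hx => hM x (Set.Ioc_subset_Icc_self hx)) n

lemma isRapidlyDecreasing_fourierCoeff {T : ℝ} [hT : Fact (0 < T)] {f : AddCircle T → ℂ}
    (hf : ContDiff ℝ ∞ fun t : ℝ => f t) : IsRapidlyDecreasing (fourierCoeff f) := by
  rw [funext (fourierCoeff_eq_fourierCoeffOn f)]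
  exact isRapidlyDecreasing_fourierCoeffOn hT.out hf fun t => by
    simp only [AddCircle.coe_add_period]

namespace IsRapidlyDecreasing

lemma summable_mul_fourier {T : ℝ} {c : ℤ → ℂ} (hc : IsRapidlyDecreasing c)
    (x : AddCircle T) : Summable fun n : ℤ => c n * fourier n x :=
  .of_norm <| by simpa [fourier_apply, Circle.norm_coe] using hc.summable_norm_mul_pow 0

open Complex in
lemma contDiff_tsum_mul_fourier {T : ℝ} {c : ℤ → ℂ} (hc : IsRapidlyDecreasing c) :
    ContDiff ℝ ∞ fun t : ℝ => ∑' n : ℤ, c n * fourier n (t : AddCircle T) := by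
  refine contDiff_tsum (v := fun k n => (2 * π / |T|) ^ k * (‖c n‖ * |(n : ℝ)| ^ k))
    (fun n => contDiff_const.mul (contDiff_fourier_coe n))
    (fun k _ => (hc.summable_norm_mul_pow k).mul_left _) fun k n t _ => ?_
  rw [norm_iteratedFDeriv_eq_norm_iteratedDeriv, iteratedDeriv_const_mul_fourier]
  apply le_of_eq
  simp only [norm_mul, norm_pow, fourier_apply, Circle.norm_coe, mul_one]
  simp [abs_of_pos pi_pos]
  ring

end IsRapidlyDecreasing

theorem AddCircle.exists_contDiff_solution {T : ℝ} [Fact (0 < T)] {ρ : AddCircle T → ℂ}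
    (hρ : ContDiff ℝ ∞ fun t : ℝ => ρ t) (α : AddCircle T) (l : ℂ)
    (hne : ∀ n : ℤ, fourier n α ≠ l) {C : ℝ} (hC : 0 < C) (N : ℕ)
    (hdio : ∀ n : ℤ, n ≠ 0 → C ≤ ‖fourier n α - l‖ * |(n : ℝ)| ^ N) :
    ∃ φ : AddCircle T → ℂ, (ContDiff ℝ ∞ fun t : ℝ => φ t) ∧
      ∀ x, φ (x + α) = l * φ x + ρ x := by
  have hρ' := isRapidlyDecreasing_fourierCoeff hρ
  set c : ℤ → ℂ := fun n => fourierCoeff ρ n / (fourier n α - l)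
  have hc : IsRapidlyDecreasing c := hρ'.div hC N hdio
  refine ⟨fun x => ∑' n, c n * fourier n x, hc.contDiff_tsum_mul_fourier, fun x => ?_⟩
  let ρc : C(AddCircle T, ℂ) := ⟨ρ, continuous_of_continuous_comp_coe hρ.continuous⟩
  have hρsum : HasSum (fun n => fourierCoeff ρ n * fourier n x) (ρ x) :=
    has_pointwise_sum_fourier_series_of_summable (f := ρc) hρ'.summable x
  have hφsum := (hc.summable_mul_fourier (x + α)).hasSum.sub
    ((hc.summable_mul_fourier x).hasSum.mul_left l)
  have hterm : ∀ n : ℤ, c n * fourier n (x + α) - l * (c n * fourier n x) =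
      fourierCoeff ρ n * fourier n x := fun n => by
    rw [fourier_apply_add, ← div_mul_cancel₀ (fourierCoeff ρ n) (sub_ne_zero.mpr (hne n))]
    ring
  simp only [hterm] at hφsum
  linear_combination hφsum.unique hρsum

open Complex in
lemma norm_fourier_coe_sub_exp (n : ℤ) (α β : ℝ) :
    ‖fourier n (α : AddCircle (1 : ℝ)) - exp (2 * π * I * β)‖ =
      ‖exp (2 * π * I * ((n : ℝ) * α - β)) - 1‖ := by
  have hsplit : fourier n (α : AddCircle (1 : ℝ)) - exp (2 * π * I * β) =
      exp (2 * π * I * β) * (exp (2 * π * I * ((n : ℝ) * α - β)) - 1) := by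
    rw [fourier_coe_apply, mul_sub, mul_one, ← Complex.exp_add]
    push_cast
    ring_nf
  rw [hsplit, norm_mul, norm_exp]
  simp

lemma le_mul_abs_pow_ceil_of_div_rpow_le {C x s : ℝ} {n : ℤ} (hn : n ≠ 0) (hx : 0 ≤ x)
    (h : C / ((max |n| 1 : ℤ) : ℝ) ^ s ≤ x) : C ≤ x * |(n : ℝ)| ^ ⌈s⌉₊ := by
  have habs : ((max |n| 1 : ℤ) : ℝ) = |(n : ℝ)| := by
    rw [max_eq_left (Int.one_le_abs hn), Int.cast_abs]
  have hn1 : 1 ≤ |(n : ℝ)| := by rw [← habs]; exact_mod_cast le_max_right |n| 1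
  rw [habs, div_le_iff₀ (by positivity)] at h
  calc C ≤ x * |(n : ℝ)| ^ s := h
    _ ≤ x * |(n : ℝ)| ^ (⌈s⌉₊ : ℝ) := by gcongr; exact Nat.le_ceil s
    _ = x * |(n : ℝ)| ^ ⌈s⌉₊ := by rw [rpow_natCast]

theorem reducible_of_diophantine_general
    (α β : ℝ)
    (ρ : AddCircle (1 : ℝ) → ℂ)
    (hρ : ContDiff ℝ (⊤ : ℕ∞) fun t : ℝ => ρ (t : AddCircle (1 : ℝ)))
    (C τ : ℝ) (hC : 0 < C)
    (hdio : ∀ n : ℤ,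
      C / ((max |n| 1 : ℤ) : ℝ) ^ ((1 : ℝ) + τ)
        ≤ ‖Complex.exp (2 * π * Complex.I * ((n : ℝ) * α - β)) - 1‖) :
    ∃ φ : AddCircle (1 : ℝ) → ℂ, Continuous φ ∧
      (ContDiff ℝ (⊤ : ℕ∞) fun t : ℝ => φ (t : AddCircle (1 : ℝ))) ∧
      ∀ x : AddCircle (1 : ℝ),
        φ (x + (α : AddCircle (1 : ℝ))) = Complex.exp (2 * π * Complex.I * β) * φ x + ρ x := by
  have hne : ∀ n : ℤ, fourier n (α : AddCircle (1 : ℝ)) ≠ Complex.exp (2 * π * Complex.I * β) :=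
    fun n => by
      rw [← sub_ne_zero, ← norm_pos_iff, norm_fourier_coe_sub_exp]
      exact (by positivity : 0 < C / _).trans_le (hdio n)
  have hbound : ∀ n : ℤ, n ≠ 0 → C ≤ ‖fourier n (α : AddCircle (1 : ℝ)) -
      Complex.exp (2 * π * Complex.I * β)‖ * |(n : ℝ)| ^ ⌈1 + τ⌉₊ := fun n hn => by
    rw [norm_fourier_coe_sub_exp]
    exact le_mul_abs_pow_ceil_of_div_rpow_le hn (norm_nonneg _) (hdio n)
  obtain ⟨φ, hφ, hφα⟩ := AddCircle.exists_contDiff_solution hρ _ _ hne hC _ hbound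
  exact ⟨φ, AddCircle.continuous_of_continuous_comp_coe hφ.continuous, hφ, hφα⟩

/-- If `ρ : 𝕋¹ → ℂ` is `C^∞` (i.e. its 1-periodic lift to `ℝ` is smooth) and the pair
`(α, β)` satisfies a type-1 Diophantine condition, then the cylindrical vortex
`F(x,z) = (x + α, e^{2πiβ} z + ρ(x))` is reducible: the cohomological equation
`φ(x + α) = e^{2πiβ} φ(x) + ρ(x)` has a continuous (indeed `C^∞`) solution `φ`. -/
theorem reducible_of_diophantine
    (α β : ℝ)
    (ρ : AddCircle (1 : ℝ) → ℂ)
    (hρ : ContDiff ℝ (⊤ : ℕ∞) fun t : ℝ => ρ (t : AddCircle (1 : ℝ)))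
    (C τ : ℝ) (hC : 0 < C) (hτ : 0 ≤ τ)
    (hdio : ∀ n : ℤ,
      C / ((max |n| 1 : ℤ) : ℝ) ^ ((1 : ℝ) + τ)
        ≤ ‖Complex.exp (2 * π * Complex.I * ((n : ℝ) * α - β)) - 1‖) :
    ∃ φ : AddCircle (1 : ℝ) → ℂ, Continuous φ ∧
      (ContDiff ℝ (⊤ : ℕ∞) fun t : ℝ => φ (t : AddCircle (1 : ℝ))) ∧
      ∀ x : AddCircle (1 : ℝ),
        φ (x + (α : AddCircle (1 : ℝ))) = Complex.exp (2 * π * Complex.I * β) * φ x + ρ x :=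
  reducible_of_diophantine_general α β ρ hρ C τ hC hdio
end
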